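/- arXiv:math/9811052 — 4 statements merged into one kernel-verified Lean document; each statement's English description precedes it below -/
import Mathlib

section
/- In a quasi-triangular quasi-Hopf algebra, the universal R-matrix satisfies the quasi-Yang–Baxter equation: R₁₂ Φ⁻¹₂₃₁ R₁₃ Φ₁₃₂ R₂₃ Φ⁻¹₁₂₃ = Φ⁻¹₃₂₁ R₂₃ Φ₃₁₂ R₁₃ Φ⁻¹₂₁₃ R₁₂. -/
open TensorProduct

noncomputable section

namespace QH

variable (K A : Type*) [Field K] [Ring A] [Algebra K A]

/-- multiply the three legs of `A ⊗ (A ⊗ A)` together. -/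
def mul3 : A ⊗[K] (A ⊗[K] A) →ₗ[K] A :=
  (LinearMap.mul' K A).comp
    (TensorProduct.map LinearMap.id (LinearMap.mul' K A))

/-- flip of legs 2 and 3 of `A ⊗ (A ⊗ A)`. -/
def σ23 : A ⊗[K] (A ⊗[K] A) →ₐ[K] A ⊗[K] (A ⊗[K] A) :=
  Algebra.TensorProduct.map (AlgHom.id K A)
    (Algebra.TensorProduct.comm K A A).toAlgHom

/-- flip of legs 1 and 2 of `A ⊗ (A ⊗ A)`. -/
def σ12 : A ⊗[K] (A ⊗[K] A) →ₐ[K] A ⊗[K] (A ⊗[K] A) :=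
  (Algebra.TensorProduct.assoc K K K A A A).toAlgHom.comp
    ((Algebra.TensorProduct.map
        (Algebra.TensorProduct.comm K A A).toAlgHom (AlgHom.id K A)).comp
      (Algebra.TensorProduct.assoc K K K A A A).symm.toAlgHom)

/-- embedding of `A ⊗ A` into legs 1,2 of `A ⊗ (A ⊗ A)`. -/
def leg12 : A ⊗[K] A →ₐ[K] A ⊗[K] (A ⊗[K] A) :=
  Algebra.TensorProduct.map (AlgHom.id K A)
    (Algebra.TensorProduct.includeLeft : A →ₐ[K] A ⊗[K] A)

/-- embedding of `A ⊗ A` into legs 2,3 of `A ⊗ (A ⊗ A)`. -/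
def leg23 : A ⊗[K] A →ₐ[K] A ⊗[K] (A ⊗[K] A) :=
  Algebra.TensorProduct.includeRight

/-- embedding of `A ⊗ A` into legs 1,3 of `A ⊗ (A ⊗ A)`. -/
def leg13 : A ⊗[K] A →ₐ[K] A ⊗[K] (A ⊗[K] A) :=
  Algebra.TensorProduct.map (AlgHom.id K A)
    (Algebra.TensorProduct.includeRight : A →ₐ[K] A ⊗[K] A)

variable {K A} in
/-- `Δ ⊗ 1`, landing in `A ⊗ (A ⊗ A)`. -/
def Δ1 (Δ : A →ₐ[K] A ⊗[K] A) : A ⊗[K] A →ₐ[K] A ⊗[K] (A ⊗[K] A) :=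
  (Algebra.TensorProduct.assoc K K K A A A).toAlgHom.comp
    (Algebra.TensorProduct.map Δ (AlgHom.id K A))

variable {K A} in
/-- `1 ⊗ Δ`. -/
def oneΔ (Δ : A →ₐ[K] A ⊗[K] A) : A ⊗[K] A →ₐ[K] A ⊗[K] (A ⊗[K] A) :=
  Algebra.TensorProduct.map (AlgHom.id K A) Δ

variable {K A} in
/-- for `t = Σ tᵢ ⊗ tⁱ`, this is `Σ tᵢ * b * S tⁱ`. -/
def adE (S : A →ₗ[K] A) (b : A) (t : A ⊗[K] A) : A :=
  (LinearMap.mul' K A)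
    ((TensorProduct.map LinearMap.id ((LinearMap.mulLeft K b).comp S)) t)

variable {K A} in
/-- for `t = Σ tᵢ ⊗ tⁱ`, this is `Σ S(tᵢ) * b * tⁱ`. -/
def antiAdE (S : A →ₗ[K] A) (b : A) (t : A ⊗[K] A) : A :=
  (LinearMap.mul' K A)
    ((TensorProduct.map ((LinearMap.mulRight K b).comp S) LinearMap.id) t)

variable {K A} in
/-- the adjoint action `Ad a · b = Σ a₍₁₎ b S(a₍₂₎)`. -/
def ad (Δ : A →ₐ[K] A ⊗[K] A) (S : A →ₗ[K] A) (a b : A) : A :=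
  adE S b (Δ a)

variable {K A} in
/-- the anti-adjoint action `Σ S(a₍₁₎) b a₍₂₎`. -/
def antiAd (Δ : A →ₐ[K] A ⊗[K] A) (S : A →ₗ[K] A) (a b : A) : A :=
  antiAdE S b (Δ a)

variable {K A} in
/-- `C₁ = Σν X̄ν c S(Ȳν) α Z̄ν`, applied to `Φ⁻¹ = Σ X̄ν ⊗ Ȳν ⊗ Z̄ν`. -/
def C1inv (S : A →ₗ[K] A) (α c : A) (Φ' : A ⊗[K] (A ⊗[K] A)) : A :=
  mul3 K A ((TensorProduct.map LinearMap.id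
    (TensorProduct.map
      ((LinearMap.mulLeft K c).comp ((LinearMap.mulRight K α).comp S))
      LinearMap.id)) Φ')

variable {K A} in
/-- for `Φ = Σ Xν ⊗ Yν ⊗ Zν`, this is `Σν S(Xν) p Yν q S(Zν)`. -/
def sandwich (S : A →ₗ[K] A) (p q : A) (Φ : A ⊗[K] (A ⊗[K] A)) : A :=
  (LinearMap.mul' K A)
    ((TensorProduct.map ((LinearMap.mulRight K p).comp S)
      ((LinearMap.mul' K A).comp
        (TensorProduct.map LinearMap.id ((LinearMap.mulLeft K q).comp S)))) Φ)

variable {K A} in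
/-- the twisted coassociator
`Φ_F = (F ⊗ 1)(Δ ⊗ 1)F · Φ · (1 ⊗ Δ)F⁻¹ (1 ⊗ F⁻¹)`. -/
def twistΦ (Δ : A →ₐ[K] A ⊗[K] A) (Φ : A ⊗[K] (A ⊗[K] A))
    (F F' : A ⊗[K] A) : A ⊗[K] (A ⊗[K] A) :=
  leg12 K A F * Δ1 Δ F * Φ * oneΔ Δ F' * leg23 K A F'

variable {K A} in
/-- the `u`-operator `u = Σ S(Yν β S(Zν)) S(eⁱ) α eᵢ Xν`. -/
def uOp (S : A →ₗ[K] A) (α β : A) (Φ : A ⊗[K] (A ⊗[K] A)) (R : A ⊗[K] A) : A :=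
  (LinearMap.mul' K A)
    ((TensorProduct.map
        ((LinearMap.mulRight K
            ((LinearMap.mul' K A)
              ((TensorProduct.map ((LinearMap.mulRight K α).comp S) LinearMap.id)
                ((TensorProduct.comm K A A) R)))).comp S)
        LinearMap.id)
      ((TensorProduct.comm K A A)
        ((TensorProduct.map LinearMap.id
          ((LinearMap.mul' K A).comp
            (TensorProduct.map LinearMap.id ((LinearMap.mulLeft K β).comp S)))) Φ)))

variable {K A} in
/-- `u⁻¹ = Σ S⁻¹(Xν) S⁻¹(α ēⁱ) ēᵢ Yν β S(Zν)`. -/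
def uInvOp (S S' : A →ₗ[K] A) (α β : A) (Φ : A ⊗[K] (A ⊗[K] A))
    (R' : A ⊗[K] A) : A :=
  (LinearMap.mul' K A)
    ((TensorProduct.map
        ((LinearMap.mulRight K
            ((LinearMap.mul' K A)
              ((TensorProduct.map (S'.comp (LinearMap.mulLeft K α)) LinearMap.id)
                ((TensorProduct.comm K A A) R')))).comp S')
        ((LinearMap.mul' K A).comp
          (TensorProduct.map LinearMap.id ((LinearMap.mulLeft K β).comp S)))) Φ)

variable (W : Type*) [AddCommGroup W] [Module K W] [Module A W]
  [IsScalarTower K A W] [SMulCommClass K A W]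

/-- the action `A ⊗[K] W →ₗ[K] W` of `A` on a module `W`. -/
def actionMap : A ⊗[K] W →ₗ[K] W :=
  TensorProduct.lift
    (LinearMap.mk₂ K (fun a w => a • w)
      (fun a b w => add_smul a b w)
      (fun k a w => smul_assoc k a w)
      (fun a w₁ w₂ => smul_add a w₁ w₂)
      (fun k a w => (smul_comm a k w)))

variable {K A W} in
/-- `y ↦ y • v` as a `K`-linear map `A →ₗ[K] W`. -/
def actOn (v : W) : A →ₗ[K] W :=
  (LinearMap.toSpanSingleton A W v).restrictScalars K

end QH

/-- A quasi-Hopf algebra over a field `K`. -/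
structure QuasiHopf (K A : Type*) [Field K] [Ring A] [Algebra K A] where
  Δ : A →ₐ[K] A ⊗[K] A
  ε : A →ₐ[K] K
  Φ : A ⊗[K] (A ⊗[K] A)
  Φ' : A ⊗[K] (A ⊗[K] A)
  S : A →ₗ[K] A
  α : A
  β : A
  S_one : S 1 = 1
  S_mul : ∀ a b : A, S (a * b) = S b * S a
  Φ_inv : Φ * Φ' = 1
  Φ_inv' : Φ' * Φ = 1
  quasi_coassoc : ∀ a : A,
    Φ * (QH.oneΔ Δ) (Δ a) = (QH.Δ1 Δ) (Δ a) * Φ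
  pentagon :
    (Algebra.TensorProduct.assoc K K K A A (A ⊗[K] A))
        ((Algebra.TensorProduct.map Δ (AlgHom.id K (A ⊗[K] A))) Φ) *
      (Algebra.TensorProduct.map (AlgHom.id K A)
        (Algebra.TensorProduct.map (AlgHom.id K A) Δ)) Φ =
    (Algebra.TensorProduct.map (AlgHom.id K A)
        (Algebra.TensorProduct.map (AlgHom.id K A)
          (Algebra.TensorProduct.includeLeft : A →ₐ[K] A ⊗[K] A))) Φ *
      (Algebra.TensorProduct.map (AlgHom.id K A) (QH.Δ1 Δ)) Φ *
      (Algebra.TensorProduct.includeRight :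
        (A ⊗[K] (A ⊗[K] A)) →ₐ[K] A ⊗[K] (A ⊗[K] (A ⊗[K] A))) Φ
  counit_left : ∀ a : A,
    (Algebra.TensorProduct.lid K A)
      ((Algebra.TensorProduct.map ε (AlgHom.id K A)) (Δ a)) = a
  counit_right : ∀ a : A,
    (Algebra.TensorProduct.rid K K A)
      ((Algebra.TensorProduct.map (AlgHom.id K A) ε) (Δ a)) = a
  counit_Φ : (Algebra.TensorProduct.map (AlgHom.id K A)
      ((Algebra.TensorProduct.lid K A).toAlgHom.comp
        (Algebra.TensorProduct.map ε (AlgHom.id K A)))) Φ = 1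
  antipode_α : ∀ a : A, QH.antiAdE S α (Δ a) = ε a • α
  antipode_β : ∀ a : A, QH.adE S β (Δ a) = ε a • β
  hopf3 : QH.mul3 K A
      ((TensorProduct.map LinearMap.id
        (TensorProduct.map ((LinearMap.mulLeft K β).comp S)
          (LinearMap.mulLeft K α))) Φ') = 1
  hopf4 : QH.sandwich S α β Φ = 1

/-- A quasi-triangular quasi-Hopf algebra. -/
structure QuasiTriangular (K A : Type*) [Field K] [Ring A] [Algebra K A]
    extends QuasiHopf K A where
  R : A ⊗[K] A
  R' : A ⊗[K] A
  R_inv : R * R' = 1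
  R_inv' : R' * R = 1
  intertwine : ∀ a : A,
    (Algebra.TensorProduct.comm K A A) (Δ a) * R = R * Δ a
  hexagon1 : (QH.Δ1 Δ) R =
    QH.σ23 K A (QH.σ12 K A Φ') * QH.leg13 K A R * QH.σ23 K A Φ *
      QH.leg23 K A R * Φ'
  hexagon2 : (QH.oneΔ Δ) R =
    QH.σ12 K A (QH.σ23 K A Φ) * QH.leg13 K A R * QH.σ12 K A Φ' *
      QH.leg12 K A R * Φ

section YBaux

variable {K A : Type*} [Field K] [Ring A] [Algebra K A]

lemma sigma12_tmul (a b c : A) :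
    QH.σ12 K A (a ⊗ₜ[K] (b ⊗ₜ[K] c)) = b ⊗ₜ[K] (a ⊗ₜ[K] c) := by
  simp [QH.σ12, Algebra.TensorProduct.assoc_symm_tmul, Algebra.TensorProduct.assoc_tmul]

lemma sigma12_leg13 (t : A ⊗[K] A) :
    QH.σ12 K A (QH.leg13 K A t) = QH.leg23 K A t := by
  induction t using TensorProduct.induction_on with
  | zero => simp
  | tmul x y => simp [QH.leg13, QH.leg23, sigma12_tmul]
  | add s t hs ht => simp [map_add, hs, ht]

lemma sigma12_leg23 (t : A ⊗[K] A) :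
    QH.σ12 K A (QH.leg23 K A t) = QH.leg13 K A t := by
  induction t using TensorProduct.induction_on with
  | zero => simp
  | tmul x y => simp [QH.leg13, QH.leg23, sigma12_tmul]
  | add s t hs ht => simp [map_add, hs, ht]

lemma sigma12_leg12 (t : A ⊗[K] A) :
    QH.σ12 K A (QH.leg12 K A t) =
      QH.leg12 K A ((Algebra.TensorProduct.comm K A A) t) := by
  induction t using TensorProduct.induction_on with
  | zero => simp
  | tmul x y => simp [QH.leg12, sigma12_tmul]
  | add s t hs ht => simp [map_add, hs, ht]

lemma delta1_tmul (Δ : A →ₐ[K] A ⊗[K] A) (a b : A) :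
    QH.Δ1 Δ (a ⊗ₜ[K] b) =
      QH.leg12 K A (Δ a) * (1 ⊗ₜ[K] (1 ⊗ₜ[K] b)) := by
  rw [QH.Δ1]
  simp only [AlgHom.coe_comp, Function.comp_apply, Algebra.TensorProduct.map_tmul,
    AlgHom.coe_id, id_eq]
  induction Δ a using TensorProduct.induction_on with
  | zero => simp
  | tmul x y =>
      simp [QH.leg12, Algebra.TensorProduct.assoc_tmul,
        Algebra.TensorProduct.tmul_mul_tmul]
  | add s t hs ht =>
      rw [add_tmul, map_add, map_add, add_mul, hs, ht]

lemma leg12_comm_e (s : A ⊗[K] A) (b : A) :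
    QH.leg12 K A s * ((1 : A) ⊗ₜ[K] ((1 : A) ⊗ₜ[K] b)) =
      ((1 : A) ⊗ₜ[K] ((1 : A) ⊗ₜ[K] b)) * QH.leg12 K A s := by
  induction s using TensorProduct.induction_on with
  | zero => simp
  | tmul x y => simp [QH.leg12, Algebra.TensorProduct.tmul_mul_tmul]
  | add s t hs ht => simp [map_add, add_mul, mul_add, hs, ht]

lemma key_intertwine (Q : QuasiTriangular K A) (t : A ⊗[K] A) :
    QH.leg12 K A Q.R * QH.Δ1 Q.Δ t =
      QH.σ12 K A (QH.Δ1 Q.Δ t) * QH.leg12 K A Q.R := by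
  induction t using TensorProduct.induction_on with
  | zero => simp
  | tmul a b =>
      rw [delta1_tmul, map_mul, sigma12_leg12, sigma12_tmul,
        ← mul_assoc, ← map_mul, ← Q.intertwine, map_mul,
        mul_assoc, mul_assoc, leg12_comm_e]
  | add s t hs ht => simp only [map_add, mul_add, add_mul, hs, ht]

end YBaux

/-- The quasi-Yang–Baxter equation:
`R₁₂ Φ⁻¹₂₃₁ R₁₃ Φ₁₃₂ R₂₃ Φ⁻¹₁₂₃ = Φ⁻¹₃₂₁ R₂₃ Φ₃₁₂ R₁₃ Φ⁻¹₂₁₃ R₁₂`. -/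
theorem statement4 {K A : Type*} [Field K] [Ring A] [Algebra K A] (Q : QuasiTriangular K A) :
    QH.leg12 K A Q.R * QH.σ23 K A (QH.σ12 K A Q.Φ') * QH.leg13 K A Q.R *
        QH.σ23 K A Q.Φ * QH.leg23 K A Q.R * Q.Φ' =
      QH.σ12 K A (QH.σ23 K A (QH.σ12 K A Q.Φ')) * QH.leg23 K A Q.R *
        QH.σ12 K A (QH.σ23 K A Q.Φ) * QH.leg13 K A Q.R * QH.σ12 K A Q.Φ' *
        QH.leg12 K A Q.R := by
  have hex := Q.hexagon1
  calc
    QH.leg12 K A Q.R * QH.σ23 K A (QH.σ12 K A Q.Φ') * QH.leg13 K A Q.R *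
        QH.σ23 K A Q.Φ * QH.leg23 K A Q.R * Q.Φ'
      = QH.leg12 K A Q.R * (QH.σ23 K A (QH.σ12 K A Q.Φ') * QH.leg13 K A Q.R *
          QH.σ23 K A Q.Φ * QH.leg23 K A Q.R * Q.Φ') := by simp only [mul_assoc]
    _ = QH.leg12 K A Q.R * QH.Δ1 Q.Δ Q.R := by rw [← hex]
    _ = QH.σ12 K A (QH.Δ1 Q.Δ Q.R) * QH.leg12 K A Q.R := key_intertwine Q Q.R
    _ = QH.σ12 K A (QH.σ23 K A (QH.σ12 K A Q.Φ')) * QH.leg23 K A Q.R *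
          QH.σ12 K A (QH.σ23 K A Q.Φ) * QH.leg13 K A Q.R * QH.σ12 K A Q.Φ' *
          QH.leg12 K A Q.R := by
        rw [hex, map_mul, map_mul, map_mul, map_mul, sigma12_leg13, sigma12_leg23]
end
end

section
/- Let c₁ ∈ A be invariant under the adjoint action, i.e. Σ a₍₁₎ c₁ S(a₍₂₎) = ε(a)c₁ for all a ∈ A. Writing Φ⁻¹ = Σ X̄ν⊗Ȳν⊗Z̄ν, the element C₁ = Σν X̄ν c₁ S(Ȳν) α Z̄ν is central in A. -/
open TensorProduct

noncomputable section

namespace QHaux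

variable {K A : Type*} [Field K] [Ring A] [Algebra K A]

lemma C1inv_tmul (S : A →ₗ[K] A) (α c p q r : A) :
    QH.C1inv S α c (p ⊗ₜ[K] (q ⊗ₜ[K] r)) = p * (c * (S q * α) * r) := by
  simp [QH.C1inv, QH.mul3]

lemma antiAdE_tmul (S : A →ₗ[K] A) (α q r : A) :
    QH.antiAdE S α (q ⊗ₜ[K] r) = S q * α * r := by
  simp [QH.antiAdE]

lemma adE_tmul (S : A →ₗ[K] A) (c p q : A) :
    QH.adE S c (p ⊗ₜ[K] q) = p * (c * S q) := by
  simp [QH.adE]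

lemma C1inv_add (S : A →ₗ[K] A) (α c : A) (x y : A ⊗[K] (A ⊗[K] A)) :
    QH.C1inv S α c (x + y) = QH.C1inv S α c x + QH.C1inv S α c y := by
  simp [QH.C1inv]

lemma antiAdE_add (S : A →ₗ[K] A) (α : A) (x y : A ⊗[K] A) :
    QH.antiAdE S α (x + y) = QH.antiAdE S α x + QH.antiAdE S α y := by
  simp [QH.antiAdE]

lemma adE_add (S : A →ₗ[K] A) (c : A) (x y : A ⊗[K] A) :
    QH.adE S c (x + y) = QH.adE S c x + QH.adE S c y := by
  simp [QH.adE]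

lemma C1inv_tmul' (S : A →ₗ[K] A) (α c p : A) (z : A ⊗[K] A) :
    QH.C1inv S α c (p ⊗ₜ[K] z) = p * (c * QH.antiAdE S α z) := by
  induction z using TensorProduct.induction_on with
  | zero => simp [QH.C1inv, QH.antiAdE]
  | tmul q r => rw [C1inv_tmul, antiAdE_tmul]; simp [mul_assoc]
  | add x y hx hy => rw [tmul_add, C1inv_add, hx, hy, antiAdE_add, mul_add, mul_add]

lemma antiAdE_mul_tmul (S : A →ₗ[K] A) (hS : ∀ a b : A, S (a*b) = S b * S a)
    (α v w : A) (r : A ⊗[K] A) :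
    QH.antiAdE S α (r * (v ⊗ₜ[K] w)) = S v * QH.antiAdE S α r * w := by
  induction r using TensorProduct.induction_on with
  | zero => simp [QH.antiAdE]
  | tmul q t =>
      rw [Algebra.TensorProduct.tmul_mul_tmul, antiAdE_tmul, antiAdE_tmul, hS]
      noncomm_ring
  | add x y hx hy => rw [add_mul, antiAdE_add, hx, hy, antiAdE_add]; noncomm_ring

lemma C1inv_mul_assoc (S : A →ₗ[K] A) (hS : ∀ a b : A, S (a*b) = S b * S a)
    (α c u v w y : A) (r : A ⊗[K] A) :
    QH.C1inv S α c ((u ⊗ₜ[K] (v ⊗ₜ[K] w)) *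
      (Algebra.TensorProduct.assoc K K K A A A (r ⊗ₜ[K] y))) =
    u * QH.adE S c r * (S v * α * (w * y)) := by
  induction r using TensorProduct.induction_on with
  | zero => simp [QH.C1inv, QH.adE]
  | tmul p q =>
      rw [Algebra.TensorProduct.assoc_tmul, Algebra.TensorProduct.tmul_mul_tmul,
        Algebra.TensorProduct.tmul_mul_tmul, C1inv_tmul, adE_tmul, hS]
      noncomm_ring
  | add x z hx hz =>
      rw [add_tmul, map_add, mul_add, C1inv_add, hx, hz, adE_add]; noncomm_ring

lemma left_act (Δ : A →ₐ[K] A ⊗[K] A) (ε : A →ₐ[K] K) (S : A →ₗ[K] A)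
    (hS : ∀ a b : A, S (a*b) = S b * S a) (α c : A)
    (hα : ∀ a : A, QH.antiAdE S α (Δ a) = ε a • α)
    (hcr : ∀ a : A, (Algebra.TensorProduct.rid K K A)
      ((Algebra.TensorProduct.map (AlgHom.id K A) ε) (Δ a)) = a)
    (b : A) (t : A ⊗[K] (A ⊗[K] A)) :
    QH.C1inv S α c (QH.oneΔ Δ (Δ b) * t) = b * QH.C1inv S α c t := by
  induction t using TensorProduct.induction_on with
  | zero => simp [QH.C1inv]
  | add x y hx hy => rw [mul_add, C1inv_add, hx, hy, C1inv_add, mul_add]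
  | tmul u z =>
    induction z using TensorProduct.induction_on with
    | zero => simp [QH.C1inv]
    | add z1 z2 h1 h2 =>
        rw [tmul_add, mul_add, C1inv_add, h1, h2, C1inv_add, mul_add]
    | tmul v w =>
      have key : ∀ s : A ⊗[K] A,
          QH.C1inv S α c (QH.oneΔ Δ s * (u ⊗ₜ[K] (v ⊗ₜ[K] w))) =
          (Algebra.TensorProduct.rid K K A)
            ((Algebra.TensorProduct.map (AlgHom.id K A) ε) s) *
            QH.C1inv S α c (u ⊗ₜ[K] (v ⊗ₜ[K] w)) := by
        intro s
        induction s using TensorProduct.induction_on with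
        | zero => simp [QH.C1inv]
        | add s1 s2 h1 h2 =>
            rw [map_add, add_mul, C1inv_add, h1, h2, map_add, map_add, add_mul]
        | tmul x y =>
          have h1 : QH.oneΔ Δ (x ⊗ₜ[K] y) = x ⊗ₜ[K] (Δ y) := by simp [QH.oneΔ]
          rw [h1, Algebra.TensorProduct.tmul_mul_tmul, C1inv_tmul',
            antiAdE_mul_tmul S hS, hα, C1inv_tmul]
          simp [Algebra.TensorProduct.rid_tmul, smul_mul_assoc, mul_smul_comm,
            mul_assoc]
      rw [key (Δ b), hcr b]

lemma right_act (Δ : A →ₐ[K] A ⊗[K] A) (ε : A →ₐ[K] K) (S : A →ₗ[K] A)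
    (hS : ∀ a b : A, S (a*b) = S b * S a) (α c : A)
    (had : ∀ a : A, QH.adE S c (Δ a) = ε a • c)
    (hcl : ∀ a : A, (Algebra.TensorProduct.lid K A)
      ((Algebra.TensorProduct.map ε (AlgHom.id K A)) (Δ a)) = a)
    (b : A) (t : A ⊗[K] (A ⊗[K] A)) :
    QH.C1inv S α c (t * QH.Δ1 Δ (Δ b)) = QH.C1inv S α c t * b := by
  induction t using TensorProduct.induction_on with
  | zero => simp [QH.C1inv]
  | add x y hx hy => rw [add_mul, C1inv_add, hx, hy, C1inv_add, add_mul]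
  | tmul u z =>
    induction z using TensorProduct.induction_on with
    | zero => simp [QH.C1inv]
    | add z1 z2 h1 h2 =>
        rw [tmul_add, add_mul, C1inv_add, h1, h2, C1inv_add, add_mul]
    | tmul v w =>
      have key : ∀ s : A ⊗[K] A,
          QH.C1inv S α c ((u ⊗ₜ[K] (v ⊗ₜ[K] w)) * QH.Δ1 Δ s) =
          QH.C1inv S α c (u ⊗ₜ[K] (v ⊗ₜ[K] w)) *
            (Algebra.TensorProduct.lid K A)
              ((Algebra.TensorProduct.map ε (AlgHom.id K A)) s) := by
        intro s
        induction s using TensorProduct.induction_on with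
        | zero => simp [QH.C1inv]
        | add s1 s2 h1 h2 =>
            rw [map_add, mul_add, C1inv_add, h1, h2, map_add, map_add, mul_add]
        | tmul x y =>
          have h1 : QH.Δ1 Δ (x ⊗ₜ[K] y) =
              (Algebra.TensorProduct.assoc K K K A A A) ((Δ x) ⊗ₜ[K] y) := by
            simp [QH.Δ1]
          rw [h1, C1inv_mul_assoc S hS, had, C1inv_tmul]
          simp [Algebra.TensorProduct.lid_tmul, smul_mul_assoc, mul_smul_comm,
            mul_assoc]
      rw [key (Δ b), hcl b]

end QHaux

/-- If `c₁` is adjoint-invariant then `C₁ = Σν X̄ν c₁ S(Ȳν) α Z̄ν` is central. -/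
theorem statement7 {K A : Type*} [Field K] [Ring A] [Algebra K A] (Q : QuasiHopf K A) (c₁ : A)
    (hc₁ : ∀ a : A, QH.ad Q.Δ Q.S a c₁ = Q.ε a • c₁) :
    ∀ b : A, QH.C1inv Q.S Q.α c₁ Q.Φ' * b = b * QH.C1inv Q.S Q.α c₁ Q.Φ' := by
  intro b
  have hS := Q.S_mul
  have hα := Q.antipode_α
  have had : ∀ a : A, QH.adE Q.S c₁ (Q.Δ a) = Q.ε a • c₁ := fun a => hc₁ a
  have h2 : QH.oneΔ Q.Δ (Q.Δ b) * Q.Φ' = Q.Φ' * QH.Δ1 Q.Δ (Q.Δ b) := by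
    have h := Q.quasi_coassoc b
    have h' : Q.Φ' * (Q.Φ * QH.oneΔ Q.Δ (Q.Δ b)) * Q.Φ'
        = Q.Φ' * (QH.Δ1 Q.Δ (Q.Δ b) * Q.Φ) * Q.Φ' := by rw [h]
    simp only [← mul_assoc] at h'
    rw [Q.Φ_inv', one_mul, mul_assoc (Q.Φ' * QH.Δ1 Q.Δ (Q.Δ b)), Q.Φ_inv,
      mul_one] at h'
    exact h'
  rw [← QHaux.right_act Q.Δ Q.ε Q.S hS Q.α c₁ had Q.counit_left b Q.Φ', ← h2,
    QHaux.left_act Q.Δ Q.ε Q.S hS Q.α c₁ hα Q.counit_right b Q.Φ']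
end
end

section
/- Let c₁ ∈ A be invariant under the adjoint action and set C₁ = Σν X̄ν c₁ S(Ȳν) α Z̄ν (with Φ⁻¹ = Σ X̄ν⊗Ȳν⊗Z̄ν). Then c₁ = C₁β = βC₁. -/
open TensorProduct

noncomputable section

namespace S8
open TensorProduct

variable {K A : Type*} [Field K] [Ring A] [Algebra K A]

section
variable (K A)
noncomputable instance ringT3 : Ring (A ⊗[K] (A ⊗[K] A)) := inferInstance
noncomputable instance ringT4 : Ring (A ⊗[K] (A ⊗[K] (A ⊗[K] A))) := inferInstance
end

/-- custom induction for `A ⊗ (A ⊗ A)` reducing to fully pure tensors -/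
theorem T3ind {P : A ⊗[K] (A ⊗[K] A) → Prop} (h0 : P 0)
    (hadd : ∀ a b, P a → P b → P (a + b))
    (ht : ∀ x y z : A, P (x ⊗ₜ (y ⊗ₜ z))) : ∀ t, P t := by
  intro t
  induction t using TensorProduct.induction_on with
  | zero => exact h0
  | add a b ha hb => exact hadd a b ha hb
  | tmul x w =>
    induction w using TensorProduct.induction_on with
    | zero => simpa using h0
    | add a b ha hb => rw [tmul_add]; exact hadd _ _ ha hb
    | tmul y z => exact ht x y z

/-- custom induction for `A ⊗ (A ⊗ (A ⊗ A))` -/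
theorem T4ind {P : A ⊗[K] (A ⊗[K] (A ⊗[K] A)) → Prop} (h0 : P 0)
    (hadd : ∀ a b, P a → P b → P (a + b))
    (ht : ∀ p q r s : A, P (p ⊗ₜ (q ⊗ₜ (r ⊗ₜ s)))) : ∀ t, P t := by
  intro t
  induction t using TensorProduct.induction_on with
  | zero => exact h0
  | add a b ha hb => exact hadd a b ha hb
  | tmul p w =>
    induction w using TensorProduct.induction_on with
    | zero => simpa using h0
    | add a b ha hb => rw [tmul_add]; exact hadd _ _ ha hb
    | tmul q z =>
      induction z using TensorProduct.induction_on with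
      | zero => simpa using h0
      | add a b ha hb => rw [tmul_add, tmul_add]; exact hadd _ _ ha hb
      | tmul r s => exact ht p q r s

variable (Q : QuasiHopf K A)

/-- master 4-leg sandwich map: `u⊗v⊗w⊗t ↦ u * ((x * (S v * y)) * (w * (z * S t)))` -/
def OmM (x y z : A) : A ⊗[K] (A ⊗[K] (A ⊗[K] A)) →ₗ[K] A :=
  (LinearMap.mul' K A).comp
    (TensorProduct.map LinearMap.id
      ((LinearMap.mul' K A).comp
        (TensorProduct.map
          ((LinearMap.mulLeft K x).comp ((LinearMap.mulRight K y).comp Q.S))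
          ((LinearMap.mul' K A).comp
            (TensorProduct.map LinearMap.id
              ((LinearMap.mulLeft K z).comp Q.S))))))

@[simp] theorem OmM_tmul (x y z u v w t : A) :
    OmM Q x y z (u ⊗ₜ (v ⊗ₜ (w ⊗ₜ t))) =
      u * ((x * (Q.S v * y)) * (w * (z * Q.S t))) := by
  simp [OmM]

/-- master 3-leg map: `u⊗v⊗w ↦ u * ((x * (S v * y)) * w)` -/
def Om3 (x y : A) : A ⊗[K] (A ⊗[K] A) →ₗ[K] A :=
  (LinearMap.mul' K A).comp
    (TensorProduct.map LinearMap.id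
      ((LinearMap.mul' K A).comp
        (TensorProduct.map
          ((LinearMap.mulLeft K x).comp ((LinearMap.mulRight K y).comp Q.S))
          LinearMap.id)))

@[simp] theorem Om3_tmul (x y u v w : A) :
    Om3 Q x y (u ⊗ₜ (v ⊗ₜ w)) = u * ((x * (Q.S v * y)) * w) := by
  simp [Om3]

theorem C1inv_eq_Om3 (t : A ⊗[K] (A ⊗[K] A)) :
    QH.C1inv Q.S Q.α c₁ t = Om3 Q c₁ Q.α t := by
  induction t using T3ind with
  | h0 => simp [QH.C1inv]
  | hadd a b ha hb =>
      simp only [QH.C1inv, map_add] at ha hb ⊢; rw [ha, hb]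
  | ht x y z => simp [QH.C1inv, QH.mul3]

end S8
namespace S8
variable {K A : Type*} [Field K] [Ring A] [Algebra K A] (Q : QuasiHopf K A)
open TensorProduct

@[simp] theorem adE_tmul (S : A →ₗ[K] A) (b u v : A) :
    QH.adE S b (u ⊗ₜ v) = u * (b * S v) := by simp [QH.adE]

@[simp] theorem antiAdE_tmul (S : A →ₗ[K] A) (b u v : A) :
    QH.antiAdE S b (u ⊗ₜ v) = (S u * b) * v := by simp [QH.antiAdE]

@[simp] theorem sandwich_tmul (S : A →ₗ[K] A) (p q x y z : A) :
    QH.sandwich S p q (x ⊗ₜ (y ⊗ₜ z)) = (S x * p) * (y * (q * S z)) := by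
  simp [QH.sandwich]

theorem OmM_smul_x (k : K) (x y z : A) (t : A ⊗[K] (A ⊗[K] (A ⊗[K] A))) :
    OmM Q (k • x) y z t = k • OmM Q x y z t := by
  induction t using T4ind with
  | h0 => rw [LinearMap.map_zero, LinearMap.map_zero, smul_zero]
  | hadd a b ha hb => simp only [map_add, ha, hb, smul_add]
  | ht p q r s => simp [smul_mul_assoc, mul_smul_comm]

theorem OmM_add_x (x x' y z : A) (t : A ⊗[K] (A ⊗[K] (A ⊗[K] A))) :
    OmM Q (x + x') y z t = OmM Q x y z t + OmM Q x' y z t := by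
  induction t using T4ind with
  | h0 => rw [LinearMap.map_zero, LinearMap.map_zero, LinearMap.map_zero, add_zero]
  | hadd a b ha hb => simp only [map_add, ha, hb]; abel
  | ht p q r s => simp [add_mul, mul_add]

theorem OmM_smul_y (k : K) (x y z : A) (t : A ⊗[K] (A ⊗[K] (A ⊗[K] A))) :
    OmM Q x (k • y) z t = k • OmM Q x y z t := by
  induction t using T4ind with
  | h0 => rw [LinearMap.map_zero, LinearMap.map_zero, smul_zero]
  | hadd a b ha hb => simp only [map_add, ha, hb, smul_add]
  | ht p q r s => simp [smul_mul_assoc, mul_smul_comm]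

theorem OmM_add_y (x y y' z : A) (t : A ⊗[K] (A ⊗[K] (A ⊗[K] A))) :
    OmM Q x (y + y') z t = OmM Q x y z t + OmM Q x y' z t := by
  induction t using T4ind with
  | h0 => rw [LinearMap.map_zero, LinearMap.map_zero, LinearMap.map_zero, add_zero]
  | hadd a b ha hb => simp only [map_add, ha, hb]; abel
  | ht p q r s => simp [add_mul, mul_add]

theorem OmM_smul_z (k : K) (x y z : A) (t : A ⊗[K] (A ⊗[K] (A ⊗[K] A))) :
    OmM Q x y (k • z) t = k • OmM Q x y z t := by
  induction t using T4ind with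
  | h0 => rw [LinearMap.map_zero, LinearMap.map_zero, smul_zero]
  | hadd a b ha hb => simp only [map_add, ha, hb, smul_add]
  | ht p q r s => simp [smul_mul_assoc, mul_smul_comm]

theorem OmM_add_z (x y z z' : A) (t : A ⊗[K] (A ⊗[K] (A ⊗[K] A))) :
    OmM Q x y (z + z') t = OmM Q x y z t + OmM Q x y z' t := by
  induction t using T4ind with
  | h0 => rw [LinearMap.map_zero, LinearMap.map_zero, LinearMap.map_zero, add_zero]
  | hadd a b ha hb => simp only [map_add, ha, hb]; abel
  | ht p q r s => simp [add_mul, mul_add]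

theorem Om3_smul_x (k : K) (x y : A) (t : A ⊗[K] (A ⊗[K] A)) :
    Om3 Q (k • x) y t = k • Om3 Q x y t := by
  induction t using T3ind with
  | h0 => rw [LinearMap.map_zero, LinearMap.map_zero, smul_zero]
  | hadd a b ha hb => simp only [map_add, ha, hb, smul_add]
  | ht u v w => simp [smul_mul_assoc, mul_smul_comm]

theorem Om3_add_x (x x' y : A) (t : A ⊗[K] (A ⊗[K] A)) :
    Om3 Q (x + x') y t = Om3 Q x y t + Om3 Q x' y t := by
  induction t using T3ind with
  | h0 => rw [LinearMap.map_zero, LinearMap.map_zero, LinearMap.map_zero, add_zero]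
  | hadd a b ha hb => simp only [map_add, ha, hb]; abel
  | ht u v w => simp [add_mul, mul_add]

theorem Om3_smul_y (k : K) (x y : A) (t : A ⊗[K] (A ⊗[K] A)) :
    Om3 Q x (k • y) t = k • Om3 Q x y t := by
  induction t using T3ind with
  | h0 => rw [LinearMap.map_zero, LinearMap.map_zero, smul_zero]
  | hadd a b ha hb => simp only [map_add, ha, hb, smul_add]
  | ht u v w => simp [smul_mul_assoc, mul_smul_comm]

theorem Om3_add_y (x y y' : A) (t : A ⊗[K] (A ⊗[K] A)) :
    Om3 Q x (y + y') t = Om3 Q x y t + Om3 Q x y' t := by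
  induction t using T3ind with
  | h0 => rw [LinearMap.map_zero, LinearMap.map_zero, LinearMap.map_zero, add_zero]
  | hadd a b ha hb => simp only [map_add, ha, hb]; abel
  | ht u v w => simp [add_mul, mul_add]

end S8
namespace S8
variable {K A : Type*} [Field K] [Ring A] [Algebra K A] (Q : QuasiHopf K A)
open TensorProduct

/-- `(Δ ⊗ 1 ⊗ 1)` into `A ⊗ (A ⊗ (A ⊗ A))` -/
def pE12 : A ⊗[K] (A ⊗[K] A) →ₐ[K] A ⊗[K] (A ⊗[K] (A ⊗[K] A)) :=
  (Algebra.TensorProduct.assoc K K K A A (A ⊗[K] A)).toAlgHom.comp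
    (Algebra.TensorProduct.map Q.Δ (AlgHom.id K (A ⊗[K] A)))

/-- `(1 ⊗ 1 ⊗ Δ)` -/
def pE34 : A ⊗[K] (A ⊗[K] A) →ₐ[K] A ⊗[K] (A ⊗[K] (A ⊗[K] A)) :=
  Algebra.TensorProduct.map (AlgHom.id K A)
    (Algebra.TensorProduct.map (AlgHom.id K A) Q.Δ)

/-- `t ↦ t ⊗ 1` in the last slot -/
def paT : A ⊗[K] (A ⊗[K] A) →ₐ[K] A ⊗[K] (A ⊗[K] (A ⊗[K] A)) :=
  Algebra.TensorProduct.map (AlgHom.id K A)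
    (Algebra.TensorProduct.map (AlgHom.id K A)
      (Algebra.TensorProduct.includeLeft : A →ₐ[K] A ⊗[K] A))

/-- `(1 ⊗ Δ ⊗ 1)` -/
def pD2 : A ⊗[K] (A ⊗[K] A) →ₐ[K] A ⊗[K] (A ⊗[K] (A ⊗[K] A)) :=
  Algebra.TensorProduct.map (AlgHom.id K A) (QH.Δ1 Q.Δ)

/-- `t ↦ 1 ⊗ t` -/
def pInc : A ⊗[K] (A ⊗[K] A) →ₐ[K] A ⊗[K] (A ⊗[K] (A ⊗[K] A)) :=
  Algebra.TensorProduct.includeRight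

theorem pentagon' :
    pE12 Q Q.Φ * pE34 Q Q.Φ = paT (K := K) (A := A) Q.Φ * pD2 Q Q.Φ * pInc (K := K) Q.Φ :=
  Q.pentagon

@[simp] theorem pE12_tmul (e : A) (w : A ⊗[K] A) :
    pE12 Q (e ⊗ₜ w) = (Algebra.TensorProduct.assoc K K K A A (A ⊗[K] A)) (Q.Δ e ⊗ₜ w) := by
  simp [pE12]

@[simp] theorem pE34_tmul (a : A) (w : A ⊗[K] A) :
    pE34 Q (a ⊗ₜ w) =
      a ⊗ₜ (Algebra.TensorProduct.map (AlgHom.id K A) Q.Δ w) := by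
  simp [pE34]

@[simp] theorem paT_tmul (x y z : A) :
    paT (K := K) (A := A) (x ⊗ₜ (y ⊗ₜ z)) = x ⊗ₜ (y ⊗ₜ (z ⊗ₜ 1)) := by
  simp [paT]

@[simp] theorem pD2_tmul (x : A) (w : A ⊗[K] A) :
    pD2 Q (x ⊗ₜ w) = x ⊗ₜ (QH.Δ1 Q.Δ w) := by
  simp [pD2]

@[simp] theorem pInc_tmul (t : A ⊗[K] (A ⊗[K] A)) :
    pInc (K := K) t = (1 : A) ⊗ₜ t := rfl

/-- `p ⊗ q ↦ ε p • q` -/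
def eL : A ⊗[K] A →ₐ[K] A :=
  (Algebra.TensorProduct.lid K A).toAlgHom.comp
    (Algebra.TensorProduct.map Q.ε (AlgHom.id K A))

/-- `p ⊗ q ↦ ε q • p` -/
def eRm : A ⊗[K] A →ₐ[K] A :=
  (Algebra.TensorProduct.rid K K A).toAlgHom.comp
    (Algebra.TensorProduct.map (AlgHom.id K A) Q.ε)

@[simp] theorem eL_tmul (p q : A) : eL Q (p ⊗ₜ q) = Q.ε p • q := by simp [eL]
@[simp] theorem eRm_tmul (p q : A) : eRm Q (p ⊗ₜ q) = Q.ε q • p := by simp [eRm]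

theorem eL_delta (a : A) : eL Q (Q.Δ a) = a := Q.counit_left a
theorem eRm_delta (a : A) : eRm Q (Q.Δ a) = a := Q.counit_right a

/-- `(1 ⊗ ε ⊗ 1)` -/
def hmid : A ⊗[K] (A ⊗[K] A) →ₐ[K] A ⊗[K] A :=
  Algebra.TensorProduct.map (AlgHom.id K A) (eL Q)

/-- `(ε ⊗ 1 ⊗ 1)` -/
def hlf : A ⊗[K] (A ⊗[K] A) →ₐ[K] A ⊗[K] A :=
  (Algebra.TensorProduct.lid K (A ⊗[K] A)).toAlgHom.comp
    (Algebra.TensorProduct.map Q.ε (AlgHom.id K (A ⊗[K] A)))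

/-- `(1 ⊗ 1 ⊗ ε)` -/
def hrt : A ⊗[K] (A ⊗[K] A) →ₐ[K] A ⊗[K] A :=
  Algebra.TensorProduct.map (AlgHom.id K A) (eRm Q)

@[simp] theorem hmid_tmul (x : A) (w : A ⊗[K] A) :
    hmid Q (x ⊗ₜ w) = x ⊗ₜ eL Q w := by simp [hmid]
@[simp] theorem hlf_tmul (x : A) (w : A ⊗[K] A) :
    hlf Q (x ⊗ₜ w) = Q.ε x • w := by simp [hlf]
@[simp] theorem hrt_tmul (x : A) (w : A ⊗[K] A) :
    hrt Q (x ⊗ₜ w) = x ⊗ₜ eRm Q w := by simp [hrt]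

theorem hmid_phi : hmid Q Q.Φ = 1 := Q.counit_Φ

theorem hmid_phi' : hmid Q Q.Φ' = 1 := by
  have h := congrArg (hmid Q) Q.Φ_inv'
  rw [map_mul, map_one, hmid_phi, mul_one] at h
  exact h

end S8
namespace S8
variable {K A : Type*} [Field K] [Ring A] [Algebra K A] (Q : QuasiHopf K A)
open TensorProduct
set_option synthInstance.maxHeartbeats 400000

/-- `(1 ⊗ ε ⊗ 1 ⊗ 1)` -/
def pi2 : A ⊗[K] (A ⊗[K] (A ⊗[K] A)) →ₐ[K] A ⊗[K] (A ⊗[K] A) :=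
  Algebra.TensorProduct.map (AlgHom.id K A) (hlf Q)

/-- `(1 ⊗ 1 ⊗ ε ⊗ 1)` -/
def pi3 : A ⊗[K] (A ⊗[K] (A ⊗[K] A)) →ₐ[K] A ⊗[K] (A ⊗[K] A) :=
  Algebra.TensorProduct.map (AlgHom.id K A) (hmid Q)

/-- embed `A ⊗ A` as legs 1,2 -/
def jm3 : A ⊗[K] A →ₐ[K] A ⊗[K] (A ⊗[K] A) :=
  Algebra.TensorProduct.map (AlgHom.id K A)
    (Algebra.TensorProduct.includeLeft : A →ₐ[K] A ⊗[K] A)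

@[simp] theorem pi2_tmul (x : A) (w : A ⊗[K] (A ⊗[K] A)) :
    pi2 Q (x ⊗ₜ w) = x ⊗ₜ hlf Q w := by simp [pi2]
@[simp] theorem pi3_tmul (x : A) (w : A ⊗[K] (A ⊗[K] A)) :
    pi3 Q (x ⊗ₜ w) = x ⊗ₜ hmid Q w := by simp [pi3]
@[simp] theorem jm3_tmul (x z : A) : jm3 (K := K) (x ⊗ₜ z) = x ⊗ₜ (z ⊗ₜ 1) := by
  simp [jm3]

theorem pi2_assoc4 (m : A ⊗[K] A) (w : A ⊗[K] A) :
    pi2 Q ((Algebra.TensorProduct.assoc K K K A A (A ⊗[K] A)) (m ⊗ₜ w)) =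
      eRm Q m ⊗ₜ w := by
  induction m using TensorProduct.induction_on with
  | zero => simp [zero_tmul]
  | add a b ha hb => simp only [add_tmul, map_add, ha, hb]
  | tmul p q => simp [Algebra.TensorProduct.assoc_tmul, tmul_smul, ← smul_tmul']

theorem hlf_assoc3 (m : A ⊗[K] A) (z : A) :
    hlf Q ((Algebra.TensorProduct.assoc K K K A A A) (m ⊗ₜ z)) = eL Q m ⊗ₜ z := by
  induction m using TensorProduct.induction_on with
  | zero => simp [zero_tmul]
  | add a b ha hb => simp only [add_tmul, map_add, ha, hb]
  | tmul p q => simp [Algebra.TensorProduct.assoc_tmul, tmul_smul, ← smul_tmul']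

theorem hmid_assoc3 (m : A ⊗[K] A) (z : A) :
    hmid Q ((Algebra.TensorProduct.assoc K K K A A A) (m ⊗ₜ z)) = eRm Q m ⊗ₜ z := by
  induction m using TensorProduct.induction_on with
  | zero => simp [zero_tmul]
  | add a b ha hb => simp only [add_tmul, map_add, ha, hb]
  | tmul p q => simp [Algebra.TensorProduct.assoc_tmul, tmul_smul, ← smul_tmul']

theorem pi3_assoc4 (m : A ⊗[K] A) (f g : A) :
    pi3 Q ((Algebra.TensorProduct.assoc K K K A A (A ⊗[K] A)) (m ⊗ₜ (f ⊗ₜ g))) =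
      (Algebra.TensorProduct.assoc K K K A A A) (m ⊗ₜ (Q.ε f • g)) := by
  induction m using TensorProduct.induction_on with
  | zero => simp [zero_tmul]
  | add a b ha hb => simp only [add_tmul, map_add, ha, hb]
  | tmul p q => simp [Algebra.TensorProduct.assoc_tmul, tmul_smul]

theorem r1 (t : A ⊗[K] (A ⊗[K] A)) : pi2 Q (pE12 Q t) = t := by
  induction t using TensorProduct.induction_on with
  | zero => simp
  | add a b ha hb => simp only [map_add, ha, hb]
  | tmul e w => rw [pE12_tmul, pi2_assoc4, eRm_delta]

theorem r2 (t : A ⊗[K] (A ⊗[K] A)) :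
    pi2 Q (pE34 Q t) = QH.oneΔ Q.Δ (hmid Q t) := by
  induction t using T3ind with
  | h0 => simp
  | hadd a b ha hb => simp only [map_add, ha, hb]
  | ht x y z => simp [QH.oneΔ, tmul_smul]

theorem r3 (t : A ⊗[K] (A ⊗[K] A)) :
    pi2 Q (paT (K := K) t) = jm3 (K := K) (hmid Q t) := by
  induction t using T3ind with
  | h0 => simp
  | hadd a b ha hb => simp only [map_add, ha, hb]
  | ht x y z => simp [tmul_smul, ← smul_tmul']

theorem r4 (t : A ⊗[K] (A ⊗[K] A)) : pi2 Q (pD2 Q t) = t := by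
  induction t using T3ind with
  | h0 => simp
  | hadd a b ha hb => simp only [map_add, ha, hb]
  | ht x y z =>
      rw [pD2_tmul, pi2_tmul, QH.Δ1]
      simp only [AlgHom.coe_comp, Function.comp_apply, AlgEquiv.toAlgHom_eq_coe,
        AlgHom.coe_coe, AlgEquiv.coe_algHom, Algebra.TensorProduct.map_tmul, AlgHom.coe_id, id_eq]
      rw [hlf_assoc3, eL_delta]

theorem r5 (t : A ⊗[K] (A ⊗[K] A)) :
    pi2 Q (pInc (K := K) t) = Algebra.TensorProduct.includeRight (hlf Q t) := by
  simp [pInc]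

theorem s1 (t : A ⊗[K] (A ⊗[K] A)) :
    pi3 Q (pE12 Q t) = QH.Δ1 Q.Δ (hmid Q t) := by
  induction t using T3ind with
  | h0 => simp
  | hadd a b ha hb => simp only [map_add, ha, hb]
  | ht e f g =>
      rw [pE12_tmul, pi3_assoc4, hmid_tmul, eL_tmul, QH.Δ1]
      simp only [AlgHom.coe_comp, Function.comp_apply, AlgEquiv.toAlgHom_eq_coe,
        AlgHom.coe_coe, AlgEquiv.coe_algHom, tmul_smul, map_smul, Algebra.TensorProduct.map_tmul,
        AlgHom.coe_id, id_eq]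

theorem s2 (t : A ⊗[K] (A ⊗[K] A)) : pi3 Q (pE34 Q t) = t := by
  induction t using T3ind with
  | h0 => simp
  | hadd a b ha hb => simp only [map_add, ha, hb]
  | ht x y z => simp [eL_delta]

theorem s3 (t : A ⊗[K] (A ⊗[K] A)) :
    pi3 Q (paT (K := K) t) = jm3 (K := K) (hrt Q t) := by
  induction t using T3ind with
  | h0 => simp
  | hadd a b ha hb => simp only [map_add, ha, hb]
  | ht x y z => simp [tmul_smul, ← smul_tmul']

theorem s4 (t : A ⊗[K] (A ⊗[K] A)) : pi3 Q (pD2 Q t) = t := by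
  induction t using T3ind with
  | h0 => simp
  | hadd a b ha hb => simp only [map_add, ha, hb]
  | ht x y z =>
      rw [pD2_tmul, pi3_tmul, QH.Δ1]
      simp only [AlgHom.coe_comp, Function.comp_apply, AlgEquiv.toAlgHom_eq_coe,
        AlgHom.coe_coe, AlgEquiv.coe_algHom, Algebra.TensorProduct.map_tmul, AlgHom.coe_id, id_eq]
      rw [hmid_assoc3, eRm_delta]

theorem s5 (t : A ⊗[K] (A ⊗[K] A)) :
    pi3 Q (pInc (K := K) t) = Algebra.TensorProduct.includeRight (hmid Q t) := by
  simp [pInc]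

theorem hlf_includeRight (r : A ⊗[K] A) :
    hlf Q (Algebra.TensorProduct.includeRight r) = r := by
  simp [Algebra.TensorProduct.includeRight_apply]

theorem hrt_jm3 (r : A ⊗[K] A) : hrt Q (jm3 (K := K) r) = r := by
  induction r using TensorProduct.induction_on with
  | zero => simp
  | add a b ha hb => simp only [map_add, ha, hb]
  | tmul p q => simp

theorem hlf_phi : hlf Q Q.Φ = 1 := by
  have h := congrArg (pi2 Q) (pentagon' Q)
  rw [map_mul, map_mul, map_mul, r1, r2, r3, r4, r5, hmid_phi, map_one, map_one,
    mul_one, one_mul] at h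
  have h2 : (Algebra.TensorProduct.includeRight (hlf Q Q.Φ) :
      A ⊗[K] (A ⊗[K] A)) = 1 := by
    have h3 := congrArg (fun x => Q.Φ' * x) h
    simp only [← mul_assoc, Q.Φ_inv', one_mul] at h3
    exact h3.symm
  have h4 := congrArg (hlf Q) h2
  rwa [hlf_includeRight, map_one] at h4

theorem hrt_phi : hrt Q Q.Φ = 1 := by
  have h := congrArg (pi3 Q) (pentagon' Q)
  rw [map_mul, map_mul, map_mul, s1, s2, s3, s4, s5, hmid_phi, map_one, map_one,
    mul_one, one_mul] at h
  have h2 : (jm3 (K := K) (hrt Q Q.Φ) : A ⊗[K] (A ⊗[K] A)) = 1 := by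
    have h3 := congrArg (fun x => x * Q.Φ') h
    simp only [mul_assoc, Q.Φ_inv, mul_one] at h3
    exact h3.symm
  have h4 := congrArg (hrt Q) h2
  rwa [hrt_jm3, map_one] at h4

theorem hlf_phi' : hlf Q Q.Φ' = 1 := by
  have h := congrArg (hlf Q) Q.Φ_inv'
  rwa [map_mul, map_one, hlf_phi, mul_one] at h

theorem hrt_phi' : hrt Q Q.Φ' = 1 := by
  have h := congrArg (hrt Q) Q.Φ_inv'
  rwa [map_mul, map_one, hrt_phi, mul_one] at h

end S8
namespace S8
variable {K A : Type*} [Field K] [Ring A] [Algebra K A] (Q : QuasiHopf K A)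
open TensorProduct
set_option synthInstance.maxHeartbeats 400000
set_option maxHeartbeats 1000000

theorem Δ1_tmul (f g : A) :
    QH.Δ1 Q.Δ (f ⊗ₜ g) = (Algebra.TensorProduct.assoc K K K A A A) (Q.Δ f ⊗ₜ g) := by
  rw [QH.Δ1]
  simp only [AlgHom.coe_comp, Function.comp_apply, AlgEquiv.toAlgHom_eq_coe,
    AlgHom.coe_coe, AlgEquiv.coe_algHom, Algebra.TensorProduct.map_tmul, AlgHom.coe_id, id_eq]

theorem oneΔ_tmul (p q : A) : QH.oneΔ Q.Δ (p ⊗ₜ q) = p ⊗ₜ Q.Δ q := by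
  simp [QH.oneΔ]

/-- embed `A ⊗ A` into legs 1,4 -/
def iMid : A ⊗[K] A →ₐ[K] A ⊗[K] (A ⊗[K] (A ⊗[K] A)) :=
  Algebra.TensorProduct.map (AlgHom.id K A)
    ((Algebra.TensorProduct.includeRight : A ⊗[K] A →ₐ[K] A ⊗[K] (A ⊗[K] A)).comp
      (Algebra.TensorProduct.includeRight : A →ₐ[K] A ⊗[K] A))

/-- embed `A ⊗ A` into legs 3,4 -/
def iR : A ⊗[K] A →ₐ[K] A ⊗[K] (A ⊗[K] (A ⊗[K] A)) :=
  (Algebra.TensorProduct.includeRight :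
      A ⊗[K] (A ⊗[K] A) →ₐ[K] A ⊗[K] (A ⊗[K] (A ⊗[K] A))).comp
    (Algebra.TensorProduct.includeRight : A ⊗[K] A →ₐ[K] A ⊗[K] (A ⊗[K] A))

/-- embed `A ⊗ A` into legs 1,2 -/
def jm4 : A ⊗[K] A →ₐ[K] A ⊗[K] (A ⊗[K] (A ⊗[K] A)) :=
  Algebra.TensorProduct.map (AlgHom.id K A)
    (Algebra.TensorProduct.includeLeft : A →ₐ[K] A ⊗[K] (A ⊗[K] A))

/-- embed `A` as leg 3 of `A ⊗ (A ⊗ A)` -/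
def incT3 : A →ₐ[K] A ⊗[K] (A ⊗[K] A) :=
  (Algebra.TensorProduct.includeRight : A ⊗[K] A →ₐ[K] A ⊗[K] (A ⊗[K] A)).comp
    (Algebra.TensorProduct.includeRight : A →ₐ[K] A ⊗[K] A)

/-- embed `A` as leg 1 of `A ⊗ (A ⊗ A)` -/
def incL3 : A →ₐ[K] A ⊗[K] (A ⊗[K] A) :=
  (Algebra.TensorProduct.includeLeft : A →ₐ[K] A ⊗[K] (A ⊗[K] A))

@[simp] theorem iMid_tmul (e g : A) :
    iMid (K := K) (e ⊗ₜ g) = e ⊗ₜ ((1 : A) ⊗ₜ ((1 : A) ⊗ₜ g)) := by simp [iMid]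
@[simp] theorem iR_apply (w : A ⊗[K] A) :
    iR (K := K) w = (1 : A) ⊗ₜ ((1 : A) ⊗ₜ[K] w) := by simp [iR]
@[simp] theorem jm4_tmul (a b : A) :
    jm4 (K := K) (a ⊗ₜ b) = a ⊗ₜ (b ⊗ₜ (1 : A ⊗[K] A)) := by simp [jm4]
@[simp] theorem incT3_apply (x : A) :
    incT3 (K := K) x = (1 : A) ⊗ₜ ((1 : A) ⊗ₜ x) := by simp [incT3]
@[simp] theorem incL3_apply (x : A) :
    incL3 (K := K) x = x ⊗ₜ (1 : A ⊗[K] A) := by simp [incL3]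

theorem OmM_zero_x (y z : A) (t : A ⊗[K] (A ⊗[K] (A ⊗[K] A))) :
    OmM Q 0 y z t = 0 := by
  induction t using T4ind with
  | h0 => rw [LinearMap.map_zero]
  | hadd a b ha hb => simp only [map_add, ha, hb, add_zero]
  | ht p q r s => simp

theorem OmM_zero_y (x z : A) (t : A ⊗[K] (A ⊗[K] (A ⊗[K] A))) :
    OmM Q x 0 z t = 0 := by
  induction t using T4ind with
  | h0 => rw [LinearMap.map_zero]
  | hadd a b ha hb => simp only [map_add, ha, hb, add_zero]
  | ht p q r s => simp

theorem OmM_zero_z (x y : A) (t : A ⊗[K] (A ⊗[K] (A ⊗[K] A))) :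
    OmM Q x y 0 t = 0 := by
  induction t using T4ind with
  | h0 => rw [LinearMap.map_zero]
  | hadd a b ha hb => simp only [map_add, ha, hb, add_zero]
  | ht p q r s => simp

theorem Om3_zero_x (y : A) (t : A ⊗[K] (A ⊗[K] A)) : Om3 Q 0 y t = 0 := by
  induction t using T3ind with
  | h0 => rw [LinearMap.map_zero]
  | hadd a b ha hb => simp only [map_add, ha, hb, add_zero]
  | ht u v w => simp

theorem Om3_zero_y (x : A) (t : A ⊗[K] (A ⊗[K] A)) : Om3 Q x 0 t = 0 := by
  induction t using T3ind with
  | h0 => rw [LinearMap.map_zero]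
  | hadd a b ha hb => simp only [map_add, ha, hb, add_zero]
  | ht u v w => simp

theorem sandwich_zero (S : A →ₗ[K] A) (p q : A) : QH.sandwich S p q 0 = 0 := by
  simp [QH.sandwich]
theorem sandwich_add (S : A →ₗ[K] A) (p q : A) (m n : A ⊗[K] (A ⊗[K] A)) :
    QH.sandwich S p q (m + n) = QH.sandwich S p q m + QH.sandwich S p q n := by
  simp [QH.sandwich]

theorem adE_zero (S : A →ₗ[K] A) (b : A) : QH.adE S b 0 = 0 := by simp [QH.adE]
theorem adE_add (S : A →ₗ[K] A) (b : A) (m n : A ⊗[K] A) :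
    QH.adE S b (m + n) = QH.adE S b m + QH.adE S b n := by simp [QH.adE]
theorem antiAdE_zero (S : A →ₗ[K] A) (b : A) : QH.antiAdE S b 0 = 0 := by
  simp [QH.antiAdE]
theorem antiAdE_add (S : A →ₗ[K] A) (b : A) (m n : A ⊗[K] A) :
    QH.antiAdE S b (m + n) = QH.antiAdE S b m + QH.antiAdE S b n := by
  simp [QH.antiAdE]

theorem helperR1 (c : A) (m : A ⊗[K] A) (w : A ⊗[K] A)
    (v : A ⊗[K] (A ⊗[K] (A ⊗[K] A))) :
    OmM Q c Q.α Q.β (v * (Algebra.TensorProduct.assoc K K K A A (A ⊗[K] A)) (m ⊗ₜ w))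
      = OmM Q (QH.adE Q.S c m) Q.α Q.β (v * iR (K := K) w) := by
  induction m using TensorProduct.induction_on with
  | zero =>
      rw [zero_tmul, map_zero, mul_zero, LinearMap.map_zero, adE_zero, OmM_zero_x]
  | add m₁ m₂ h₁ h₂ =>
      rw [add_tmul, map_add, mul_add, map_add, h₁, h₂, adE_add, OmM_add_x]
  | tmul r' s' =>
    induction w using TensorProduct.induction_on with
    | zero =>
        rw [tmul_zero, map_zero, mul_zero, LinearMap.map_zero, map_zero,
          mul_zero, LinearMap.map_zero]
    | add w₁ w₂ h₁ h₂ =>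
        rw [tmul_add, map_add, mul_add, map_add, h₁, h₂, map_add, mul_add, map_add]
    | tmul f g =>
      induction v using T4ind with
      | h0 => rw [zero_mul, zero_mul, LinearMap.map_zero, LinearMap.map_zero]
      | hadd a b ha hb => rw [add_mul, add_mul, map_add, map_add, ha, hb]
      | ht p q r s =>
          rw [Algebra.TensorProduct.assoc_tmul, iR_apply]
          rw [Algebra.TensorProduct.tmul_mul_tmul, Algebra.TensorProduct.tmul_mul_tmul,
            Algebra.TensorProduct.tmul_mul_tmul, Algebra.TensorProduct.tmul_mul_tmul,
            Algebra.TensorProduct.tmul_mul_tmul, Algebra.TensorProduct.tmul_mul_tmul]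
          rw [OmM_tmul, OmM_tmul, adE_tmul]
          simp only [Q.S_mul, mul_one, mul_assoc]

theorem ruleR1 (c₁ : A) (hc : ∀ a, QH.ad Q.Δ Q.S a c₁ = Q.ε a • c₁)
    (v : A ⊗[K] (A ⊗[K] (A ⊗[K] A))) (u : A ⊗[K] (A ⊗[K] A)) :
    OmM Q c₁ Q.α Q.β (v * pE12 Q u) = OmM Q c₁ Q.α Q.β (v * iR (hlf Q u)) := by
  induction u using TensorProduct.induction_on with
  | zero => rw [map_zero, mul_zero, LinearMap.map_zero, map_zero, map_zero,
      mul_zero, LinearMap.map_zero]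
  | add a b ha hb => rw [map_add, mul_add, map_add, ha, hb, map_add, map_add,
      mul_add, map_add]
  | tmul e w =>
      have hce : QH.adE Q.S c₁ (Q.Δ e) = Q.ε e • c₁ := hc e
      rw [pE12_tmul, helperR1, hce, OmM_smul_x, hlf_tmul, map_smul,
        mul_smul_comm, map_smul]

theorem helperL (c₁ : A) (m : A ⊗[K] A) (e g : A)
    (Z : A ⊗[K] (A ⊗[K] (A ⊗[K] A))) :
    OmM Q c₁ Q.α Q.β ((e ⊗ₜ (Algebra.TensorProduct.assoc K K K A A A (m ⊗ₜ g))) * Z)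
      = OmM Q c₁ (QH.antiAdE Q.S Q.α m) Q.β
          ((e ⊗ₜ ((1 : A) ⊗ₜ ((1 : A) ⊗ₜ g))) * Z) := by
  induction m using TensorProduct.induction_on with
  | zero =>
      rw [zero_tmul, map_zero, tmul_zero, zero_mul, LinearMap.map_zero,
        antiAdE_zero, OmM_zero_y]
  | add m₁ m₂ h₁ h₂ =>
      rw [add_tmul, map_add, tmul_add, add_mul, map_add, h₁, h₂, antiAdE_add,
        OmM_add_y]
  | tmul f₁ f₂ =>
    induction Z using T4ind with
    | h0 => rw [mul_zero, mul_zero, LinearMap.map_zero, LinearMap.map_zero]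
    | hadd a b ha hb => rw [mul_add, mul_add, map_add, map_add, ha, hb]
    | ht p q r s =>
        rw [Algebra.TensorProduct.assoc_tmul, antiAdE_tmul]
        rw [Algebra.TensorProduct.tmul_mul_tmul, Algebra.TensorProduct.tmul_mul_tmul,
          Algebra.TensorProduct.tmul_mul_tmul, Algebra.TensorProduct.tmul_mul_tmul,
          Algebra.TensorProduct.tmul_mul_tmul, Algebra.TensorProduct.tmul_mul_tmul]
        rw [OmM_tmul, OmM_tmul]
        simp only [Q.S_mul, one_mul, mul_assoc]

theorem ruleL (c₁ : A) (t : A ⊗[K] (A ⊗[K] A)) (Z : A ⊗[K] (A ⊗[K] (A ⊗[K] A))) :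
    OmM Q c₁ Q.α Q.β (pD2 Q t * Z)
      = OmM Q c₁ Q.α Q.β (iMid (hmid Q t) * Z) := by
  induction t using T3ind with
  | h0 => rw [map_zero, zero_mul, LinearMap.map_zero, map_zero, map_zero,
      zero_mul, LinearMap.map_zero]
  | hadd a b ha hb => rw [map_add, add_mul, map_add, ha, hb, map_add, map_add,
      add_mul, map_add]
  | ht e f g =>
      rw [pD2_tmul, Δ1_tmul, helperL, Q.antipode_α, OmM_smul_y, hmid_tmul,
        eL_tmul, tmul_smul, map_smul, smul_mul_assoc, map_smul, iMid_tmul]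

theorem helperR2 (c₁ : A) (m : A ⊗[K] A) (a b : A)
    (v : A ⊗[K] (A ⊗[K] (A ⊗[K] A))) :
    OmM Q c₁ Q.α Q.β (v * (a ⊗ₜ (b ⊗ₜ m)))
      = OmM Q c₁ Q.α (QH.adE Q.S Q.β m) (v * (a ⊗ₜ (b ⊗ₜ (1 : A ⊗[K] A)))) := by
  induction m using TensorProduct.induction_on with
  | zero =>
      rw [tmul_zero, tmul_zero, mul_zero, LinearMap.map_zero, adE_zero, OmM_zero_z]
  | add m₁ m₂ h₁ h₂ =>
      rw [tmul_add, tmul_add, mul_add, map_add, h₁, h₂, adE_add, OmM_add_z]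
  | tmul d₁ d₂ =>
    induction v using T4ind with
    | h0 => rw [zero_mul, zero_mul, LinearMap.map_zero, LinearMap.map_zero]
    | hadd x y hx hy => rw [add_mul, add_mul, map_add, map_add, hx, hy]
    | ht p q r s =>
        rw [adE_tmul, Algebra.TensorProduct.one_def]
        rw [Algebra.TensorProduct.tmul_mul_tmul, Algebra.TensorProduct.tmul_mul_tmul,
          Algebra.TensorProduct.tmul_mul_tmul, Algebra.TensorProduct.tmul_mul_tmul,
          Algebra.TensorProduct.tmul_mul_tmul, Algebra.TensorProduct.tmul_mul_tmul]
        rw [OmM_tmul, OmM_tmul]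
        simp only [Q.S_mul, mul_one, mul_assoc]

theorem ruleR2 (c₁ : A) (v : A ⊗[K] (A ⊗[K] (A ⊗[K] A))) (t : A ⊗[K] (A ⊗[K] A)) :
    OmM Q c₁ Q.α Q.β (v * pE34 Q t)
      = OmM Q c₁ Q.α Q.β (v * jm4 (hrt Q t)) := by
  induction t using T3ind with
  | h0 => rw [map_zero, mul_zero, LinearMap.map_zero, map_zero, map_zero,
      mul_zero, LinearMap.map_zero]
  | hadd a b ha hb => rw [map_add, mul_add, map_add, ha, hb, map_add, map_add,
      mul_add, map_add]
  | ht a b d =>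
      rw [pE34_tmul, Algebra.TensorProduct.map_tmul, AlgHom.coe_id, id_eq,
        helperR2, Q.antipode_β, OmM_smul_z, hrt_tmul, eRm_tmul, tmul_smul,
        map_smul, mul_smul_comm, map_smul, jm4_tmul]

theorem ruleR3 (c₁ : A) (t : A ⊗[K] (A ⊗[K] A)) :
    OmM Q c₁ Q.α Q.β (pInc (K := K) t) = c₁ * QH.sandwich Q.S Q.α Q.β t := by
  induction t using T3ind with
  | h0 => rw [map_zero, LinearMap.map_zero, sandwich_zero, mul_zero]
  | hadd a b ha hb =>
      rw [map_add, LinearMap.map_add, ha, hb, sandwich_add, mul_add]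
  | ht x y z => rw [pInc_tmul, OmM_tmul, sandwich_tmul]; simp only [one_mul, mul_assoc]

theorem ruleL2 (c₁ : A) (u : A ⊗[K] (A ⊗[K] A)) :
    OmM Q c₁ Q.α Q.β (paT (K := K) u) = Om3 Q c₁ Q.α u * Q.β := by
  induction u using T3ind with
  | h0 => rw [map_zero, LinearMap.map_zero, LinearMap.map_zero, zero_mul]
  | hadd a b ha hb => rw [map_add, map_add, ha, hb, LinearMap.map_add, add_mul]
  | ht x y z =>
      rw [paT_tmul, OmM_tmul, Om3_tmul, Q.S_one]
      simp only [mul_one, mul_assoc]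

end S8
namespace S8
variable {K A : Type*} [Field K] [Ring A] [Algebra K A] (Q : QuasiHopf K A)
open TensorProduct
set_option synthInstance.maxHeartbeats 400000
set_option maxHeartbeats 1000000

theorem helperC1 (c : A) (m : A ⊗[K] A) (q : A) (u : A ⊗[K] (A ⊗[K] A)) :
    Om3 Q c Q.α (u * (Algebra.TensorProduct.assoc K K K A A A) (m ⊗ₜ q))
      = Om3 Q (QH.adE Q.S c m) Q.α (u * incT3 (K := K) q) := by
  induction m using TensorProduct.induction_on with
  | zero =>
      rw [zero_tmul, map_zero, mul_zero, LinearMap.map_zero, adE_zero, Om3_zero_x]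
  | add m₁ m₂ h₁ h₂ =>
      rw [add_tmul, map_add, mul_add, map_add, h₁, h₂, adE_add, Om3_add_x]
  | tmul p₁ p₂ =>
    induction u using T3ind with
    | h0 => rw [zero_mul, zero_mul, LinearMap.map_zero, LinearMap.map_zero]
    | hadd x y hx hy => rw [add_mul, add_mul, map_add, map_add, hx, hy]
    | ht x y z =>
        rw [Algebra.TensorProduct.assoc_tmul, adE_tmul, incT3_apply]
        rw [Algebra.TensorProduct.tmul_mul_tmul, Algebra.TensorProduct.tmul_mul_tmul,
          Algebra.TensorProduct.tmul_mul_tmul, Algebra.TensorProduct.tmul_mul_tmul]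
        rw [Om3_tmul, Om3_tmul]
        simp only [Q.S_mul, mul_one, mul_assoc]

theorem ruleC1 (c₁ : A) (hc : ∀ a, QH.ad Q.Δ Q.S a c₁ = Q.ε a • c₁)
    (u : A ⊗[K] (A ⊗[K] A)) (n : A ⊗[K] A) :
    Om3 Q c₁ Q.α (u * QH.Δ1 Q.Δ n)
      = Om3 Q c₁ Q.α (u * incT3 (K := K) (eL Q n)) := by
  induction n using TensorProduct.induction_on with
  | zero => rw [map_zero, mul_zero, LinearMap.map_zero, map_zero, map_zero,
      mul_zero, LinearMap.map_zero]
  | add a b ha hb => rw [map_add, mul_add, map_add, ha, hb, map_add, map_add,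
      mul_add, map_add]
  | tmul p q =>
      have hcp : QH.adE Q.S c₁ (Q.Δ p) = Q.ε p • c₁ := hc p
      rw [Δ1_tmul, helperC1, hcp, Om3_smul_x, eL_tmul, map_smul,
        mul_smul_comm, map_smul]

theorem ruleC2 (c₁ : A) (u : A ⊗[K] (A ⊗[K] A)) (x : A) :
    Om3 Q c₁ Q.α (u * incT3 (K := K) x) = Om3 Q c₁ Q.α u * x := by
  induction u using T3ind with
  | h0 => simp only [zero_mul, mul_zero, LinearMap.map_zero]
  | hadd a b ha hb => rw [add_mul, map_add, ha, hb, LinearMap.map_add, add_mul]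
  | ht p y z =>
      rw [incT3_apply, Algebra.TensorProduct.tmul_mul_tmul,
        Algebra.TensorProduct.tmul_mul_tmul, Om3_tmul, Om3_tmul]
      simp only [mul_one, one_mul, mul_assoc]

theorem helperC3 (c : A) (m : A ⊗[K] A) (p : A) (u : A ⊗[K] (A ⊗[K] A)) :
    Om3 Q c Q.α ((p ⊗ₜ m) * u)
      = Om3 Q c (QH.antiAdE Q.S Q.α m) ((p ⊗ₜ (1 : A ⊗[K] A)) * u) := by
  induction m using TensorProduct.induction_on with
  | zero => rw [tmul_zero, zero_mul, LinearMap.map_zero, antiAdE_zero, Om3_zero_y]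
  | add m₁ m₂ h₁ h₂ =>
      rw [tmul_add, add_mul, map_add, h₁, h₂, antiAdE_add, Om3_add_y]
  | tmul q₁ q₂ =>
    induction u using T3ind with
    | h0 => rw [mul_zero, mul_zero, LinearMap.map_zero, LinearMap.map_zero]
    | hadd x y hx hy => rw [mul_add, mul_add, map_add, map_add, hx, hy]
    | ht x y z =>
        rw [antiAdE_tmul, Algebra.TensorProduct.one_def]
        rw [Algebra.TensorProduct.tmul_mul_tmul, Algebra.TensorProduct.tmul_mul_tmul,
          Algebra.TensorProduct.tmul_mul_tmul, Algebra.TensorProduct.tmul_mul_tmul]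
        rw [Om3_tmul, Om3_tmul]
        simp only [Q.S_mul, one_mul, mul_assoc]

theorem ruleC3 (c₁ : A) (n : A ⊗[K] A) (u : A ⊗[K] (A ⊗[K] A)) :
    Om3 Q c₁ Q.α (QH.oneΔ Q.Δ n * u)
      = Om3 Q c₁ Q.α (incL3 (K := K) (eRm Q n) * u) := by
  induction n using TensorProduct.induction_on with
  | zero => rw [map_zero, zero_mul, LinearMap.map_zero, map_zero, map_zero,
      zero_mul, LinearMap.map_zero]
  | add a b ha hb => rw [map_add, add_mul, map_add, ha, hb, map_add, map_add,
      add_mul, map_add]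
  | tmul p q =>
      rw [oneΔ_tmul, helperC3, Q.antipode_α, Om3_smul_y, eRm_tmul, map_smul,
        smul_mul_assoc, map_smul, incL3_apply]

theorem ruleC4 (c₁ : A) (x : A) (u : A ⊗[K] (A ⊗[K] A)) :
    Om3 Q c₁ Q.α (incL3 (K := K) x * u) = x * Om3 Q c₁ Q.α u := by
  induction u using T3ind with
  | h0 => simp only [zero_mul, mul_zero, LinearMap.map_zero]
  | hadd a b ha hb => rw [mul_add, map_add, ha, hb, LinearMap.map_add, mul_add]
  | ht p y z =>
      rw [incL3_apply, Algebra.TensorProduct.tmul_mul_tmul, one_mul, Om3_tmul,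
        Om3_tmul]
      simp only [mul_assoc]

end S8
namespace S8
variable {K A : Type*} [Field K] [Ring A] [Algebra K A] (Q : QuasiHopf K A)
open TensorProduct
set_option synthInstance.maxHeartbeats 400000
set_option maxHeartbeats 1000000

theorem central (c₁ : A) (hc : ∀ a, QH.ad Q.Δ Q.S a c₁ = Q.ε a • c₁) (a : A) :
    a * Om3 Q c₁ Q.α Q.Φ' = Om3 Q c₁ Q.α Q.Φ' * a := by
  have h := Q.quasi_coassoc a
  have hqc : QH.oneΔ Q.Δ (Q.Δ a) * Q.Φ' = Q.Φ' * QH.Δ1 Q.Δ (Q.Δ a) := by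
    calc QH.oneΔ Q.Δ (Q.Δ a) * Q.Φ'
        = (Q.Φ' * Q.Φ) * (QH.oneΔ Q.Δ (Q.Δ a) * Q.Φ') := by rw [Q.Φ_inv', one_mul]
      _ = Q.Φ' * ((Q.Φ * QH.oneΔ Q.Δ (Q.Δ a)) * Q.Φ') := by
            rw [mul_assoc, ← mul_assoc Q.Φ]
      _ = Q.Φ' * ((QH.Δ1 Q.Δ (Q.Δ a) * Q.Φ) * Q.Φ') := by rw [h]
      _ = Q.Φ' * (QH.Δ1 Q.Δ (Q.Δ a) * (Q.Φ * Q.Φ')) := by rw [mul_assoc]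
      _ = Q.Φ' * QH.Δ1 Q.Δ (Q.Δ a) := by rw [Q.Φ_inv, mul_one]
  have h2 := congrArg (Om3 Q c₁ Q.α) hqc
  rw [ruleC3, eRm_delta, ruleC4, ruleC1 Q c₁ hc, eL_delta, ruleC2] at h2
  exact h2

theorem pentA3 :
    pD2 Q Q.Φ' * paT (K := K) (A := A) Q.Φ'
      = pInc (K := K) Q.Φ * (pE34 Q Q.Φ' * pE12 Q Q.Φ') := by
  have hE12 : pE12 Q Q.Φ * pE12 Q Q.Φ' = 1 := by rw [← map_mul, Q.Φ_inv, map_one]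
  have hE34 : pE34 Q Q.Φ * pE34 Q Q.Φ' = 1 := by rw [← map_mul, Q.Φ_inv, map_one]
  have haT : paT (K := K) (A := A) Q.Φ' * paT (K := K) (A := A) Q.Φ = 1 := by
    rw [← map_mul, Q.Φ_inv', map_one]
  have hD2 : pD2 Q Q.Φ' * pD2 Q Q.Φ = 1 := by rw [← map_mul, Q.Φ_inv', map_one]
  have e1 : paT (K := K) (A := A) Q.Φ * (pD2 Q Q.Φ * pInc (K := K) Q.Φ)
      = pE12 Q Q.Φ * pE34 Q Q.Φ := by
    rw [← mul_assoc]; exact (pentagon' Q).symm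
  have e2 : pD2 Q Q.Φ * pInc (K := K) Q.Φ
      = paT (K := K) (A := A) Q.Φ' * (pE12 Q Q.Φ * pE34 Q Q.Φ) := by
    rw [← e1, ← mul_assoc, haT, one_mul]
  have e3 : (pInc (K := K) Q.Φ : A ⊗[K] (A ⊗[K] (A ⊗[K] A)))
      = pD2 Q Q.Φ' * (paT (K := K) (A := A) Q.Φ' * (pE12 Q Q.Φ * pE34 Q Q.Φ)) := by
    rw [← e2, ← mul_assoc, hD2, one_mul]
  have e4 : pInc (K := K) Q.Φ * (pE34 Q Q.Φ' * pE12 Q Q.Φ')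
      = pD2 Q Q.Φ' * paT (K := K) (A := A) Q.Φ' := by
    rw [e3]
    simp only [mul_assoc]
    rw [← mul_assoc (pE34 Q Q.Φ) (pE34 Q Q.Φ') (pE12 Q Q.Φ'), hE34, one_mul,
      hE12, mul_one]
  exact e4.symm

theorem half1 (c₁ : A) (hc : ∀ a, QH.ad Q.Δ Q.S a c₁ = Q.ε a • c₁) :
    Om3 Q c₁ Q.α Q.Φ' * Q.β = c₁ := by
  have h := congrArg (OmM Q c₁ Q.α Q.β) (pentA3 Q)
  rw [ruleL, hmid_phi', map_one, one_mul, ruleL2] at h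
  rw [← mul_assoc, ruleR1 Q c₁ hc, hlf_phi', map_one, mul_one,
    ruleR2, hrt_phi', map_one, mul_one, ruleR3, Q.hopf4, mul_one] at h
  exact h

end S8

/-- If `c₁` is adjoint-invariant and `C₁ = Σν X̄ν c₁ S(Ȳν) α Z̄ν`, then
`c₁ = C₁ β = β C₁`. -/
theorem statement8 {K A : Type*} [Field K] [Ring A] [Algebra K A] (Q : QuasiHopf K A) (c₁ : A)
    (hc₁ : ∀ a : A, QH.ad Q.Δ Q.S a c₁ = Q.ε a • c₁) :
    c₁ = QH.C1inv Q.S Q.α c₁ Q.Φ' * Q.β ∧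
    c₁ = Q.β * QH.C1inv Q.S Q.α c₁ Q.Φ' := by
  constructor
  · rw [S8.C1inv_eq_Om3]
    exact (S8.half1 Q c₁ hc₁).symm
  · rw [S8.C1inv_eq_Om3, S8.central Q c₁ hc₁ Q.β]
    exact (S8.half1 Q c₁ hc₁).symm
end
end

section
/- An element c ∈ A is invariant under the adjoint action (Σ a₍₁₎cS(a₍₂₎) = ε(a)c for all a) if and only if there exists a central element C ∈ A such that c = Cβ = βC. -/
open TensorProduct

noncomputable section

section QHAuxSect

set_option maxHeartbeats 1000000
set_option synthInstance.maxHeartbeats 400000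
set_option maxRecDepth 4000

open TensorProduct

namespace QHAux

variable {K A : Type*} [Field K] [Ring A] [Algebra K A] (Q : QuasiHopf K A)


/-! ### arithmetic helpers (instance-path-stable forms) -/

@[simp] lemma t2_mul_zero (T : A ⊗[K] A) : T * 0 = 0 := mul_zero T
@[simp] lemma t2_zero_mul (T : A ⊗[K] A) : 0 * T = 0 := zero_mul T
@[simp] lemma t2_mul_add (T x y : A ⊗[K] A) : T * (x + y) = T * x + T * y := mul_add T x y
@[simp] lemma t2_add_mul (T x y : A ⊗[K] A) : (x + y) * T = x * T + y * T := add_mul x y T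
@[simp] lemma t2_mul_one (T : A ⊗[K] A) : T * 1 = T := mul_one T
@[simp] lemma t2_one_mul (T : A ⊗[K] A) : 1 * T = T := one_mul T
@[simp] lemma t2_mul_smul (k : K) (T x : A ⊗[K] A) : T * (k • x) = k • (T * x) := mul_smul_comm k T x
@[simp] lemma t2_smul_mul (k : K) (T x : A ⊗[K] A) : (k • x) * T = k • (x * T) := smul_mul_assoc k x T

@[simp] lemma t3_mul_zero (T : A ⊗[K] (A ⊗[K] A)) : T * 0 = 0 := mul_zero T
@[simp] lemma t3_zero_mul (T : A ⊗[K] (A ⊗[K] A)) : 0 * T = 0 := zero_mul T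
@[simp] lemma t3_mul_add (T x y : A ⊗[K] (A ⊗[K] A)) : T * (x + y) = T * x + T * y := mul_add T x y
@[simp] lemma t3_add_mul (T x y : A ⊗[K] (A ⊗[K] A)) : (x + y) * T = x * T + y * T := add_mul x y T
@[simp] lemma t3_mul_one (T : A ⊗[K] (A ⊗[K] A)) : T * 1 = T := mul_one T
@[simp] lemma t3_one_mul (T : A ⊗[K] (A ⊗[K] A)) : 1 * T = T := one_mul T
@[simp] lemma t3_mul_smul (k : K) (T x : A ⊗[K] (A ⊗[K] A)) : T * (k • x) = k • (T * x) := mul_smul_comm k T x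
@[simp] lemma t3_smul_mul (k : K) (T x : A ⊗[K] (A ⊗[K] A)) : (k • x) * T = k • (x * T) := smul_mul_assoc k x T

@[simp] lemma t4_mul_zero (T : A ⊗[K] (A ⊗[K] (A ⊗[K] A))) : T * 0 = 0 := mul_zero T
@[simp] lemma t4_zero_mul (T : A ⊗[K] (A ⊗[K] (A ⊗[K] A))) : 0 * T = 0 := zero_mul T
@[simp] lemma t4_mul_add (T x y : A ⊗[K] (A ⊗[K] (A ⊗[K] A))) : T * (x + y) = T * x + T * y :=
  @mul_add _ _ _ (@Distrib.leftDistribClass _ NonUnitalNonAssocSemiring.toDistrib) T x y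
@[simp] lemma t4_add_mul (T x y : A ⊗[K] (A ⊗[K] (A ⊗[K] A))) : (x + y) * T = x * T + y * T :=
  @add_mul _ _ _ (@Distrib.rightDistribClass _ NonUnitalNonAssocSemiring.toDistrib) x y T
@[simp] lemma t4_mul_one (T : A ⊗[K] (A ⊗[K] (A ⊗[K] A))) : T * 1 = T := mul_one T
@[simp] lemma t4_one_mul (T : A ⊗[K] (A ⊗[K] (A ⊗[K] A))) : 1 * T = T := one_mul T
@[simp] lemma t4_mul_smul (k : K) (T x : A ⊗[K] (A ⊗[K] (A ⊗[K] A))) : T * (k • x) = k • (T * x) := mul_smul_comm k T x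
@[simp] lemma t4_smul_mul (k : K) (T x : A ⊗[K] (A ⊗[K] (A ⊗[K] A))) : (k • x) * T = k • (x * T) := smul_mul_assoc k x T

lemma t2_mul_assoc (x y z : A ⊗[K] A) : (x * y) * z = x * (y * z) := mul_assoc x y z
lemma t3_mul_assoc (x y z : A ⊗[K] (A ⊗[K] A)) : (x * y) * z = x * (y * z) := mul_assoc x y z
lemma t4_mul_assoc (x y z : A ⊗[K] (A ⊗[K] (A ⊗[K] A))) : (x * y) * z = x * (y * z) := mul_assoc x y z

/-! ### Basic collapse maps -/


@[simp] lemma adE_tmul (S : A →ₗ[K] A) (b x y : A) :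
    QH.adE S b (x ⊗ₜ[K] y) = x * (b * S y) := by
  simp [QH.adE]

@[simp] lemma adE_zero (S : A →ₗ[K] A) (b : A) : QH.adE S b 0 = 0 := by
  simp [QH.adE]

@[simp] lemma adE_add (S : A →ₗ[K] A) (b : A) (s t : A ⊗[K] A) :
    QH.adE S b (s + t) = QH.adE S b s + QH.adE S b t := by
  simp [QH.adE]

@[simp] lemma adE_smul (S : A →ₗ[K] A) (b : A) (k : K) (s : A ⊗[K] A) :
    QH.adE S b (k • s) = k • QH.adE S b s := by
  simp [QH.adE]

@[simp] lemma antiAdE_tmul (S : A →ₗ[K] A) (b x y : A) :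
    QH.antiAdE S b (x ⊗ₜ[K] y) = S x * b * y := by
  simp [QH.antiAdE]

@[simp] lemma antiAdE_zero (S : A →ₗ[K] A) (b : A) : QH.antiAdE S b 0 = 0 := by
  simp [QH.antiAdE]

@[simp] lemma antiAdE_add (S : A →ₗ[K] A) (b : A) (s t : A ⊗[K] A) :
    QH.antiAdE S b (s + t) = QH.antiAdE S b s + QH.antiAdE S b t := by
  simp [QH.antiAdE]

/-- `Σ (v*s¹) b S(w*s²) = v * (Σ s¹ b S s²) * S w`, key product rule. -/
lemma adE_mul (b v w : A) (s : A ⊗[K] A) :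
    QH.adE Q.S b ((v ⊗ₜ[K] w) * s) = v * (QH.adE Q.S b s * Q.S w) := by
  induction s using TensorProduct.induction_on with
  | zero => simp
  | tmul p q => simp [Algebra.TensorProduct.tmul_mul_tmul, Q.S_mul, mul_assoc]
  | add x y hx hy => simp [mul_add, add_mul, hx, hy]

/-- sandwich map `u ⊗ (v ⊗ w) ↦ S u * α * (v * (β * S w))` (the `hopf4` pattern). -/
def swl : A ⊗[K] (A ⊗[K] A) →ₗ[K] A :=
  (LinearMap.mul' K A).comp
    (TensorProduct.map ((LinearMap.mulRight K Q.α).comp Q.S)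
      ((LinearMap.mul' K A).comp
        (TensorProduct.map LinearMap.id ((LinearMap.mulLeft K Q.β).comp Q.S))))

@[simp] lemma swl_tmul (u : A) (r : A ⊗[K] A) :
    swl Q (u ⊗ₜ[K] r) = (Q.S u * Q.α) * QH.adE Q.S Q.β r := by
  simp [swl, QH.adE]

lemma swl_Phi : swl Q Q.Φ = 1 := Q.hopf4

/-- `Ξ(t ⊗ (u ⊗ (v ⊗ w))) = (t*c) * (S u * α * (v * (β * S w)))`. -/
def Xi (c : A) : A ⊗[K] (A ⊗[K] (A ⊗[K] A)) →ₗ[K] A :=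
  (LinearMap.mul' K A).comp (TensorProduct.map (LinearMap.mulRight K c) (swl Q))

@[simp] lemma Xi_tmul (c x : A) (r : A ⊗[K] (A ⊗[K] A)) :
    Xi Q c (x ⊗ₜ[K] r) = (x * c) * swl Q r := by
  simp [Xi]

end QHAux

end QHAuxSect

section QHAuxSect2

open TensorProduct

namespace QHAux

variable {K A : Type*} [Field K] [Ring A] [Algebra K A] (Q : QuasiHopf K A)

/-! ### The five pentagon factor maps -/

def t1m : (A ⊗[K] (A ⊗[K] A)) →ₐ[K] A ⊗[K] (A ⊗[K] (A ⊗[K] A)) :=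
  (Algebra.TensorProduct.assoc K K K A A (A ⊗[K] A)).toAlgHom.comp
    (Algebra.TensorProduct.map Q.Δ (AlgHom.id K (A ⊗[K] A)))

def t2m : (A ⊗[K] (A ⊗[K] A)) →ₐ[K] A ⊗[K] (A ⊗[K] (A ⊗[K] A)) :=
  Algebra.TensorProduct.map (AlgHom.id K A)
    (Algebra.TensorProduct.map (AlgHom.id K A) Q.Δ)

def r1m (_Q : QuasiHopf K A) : (A ⊗[K] (A ⊗[K] A)) →ₐ[K] A ⊗[K] (A ⊗[K] (A ⊗[K] A)) :=
  Algebra.TensorProduct.map (AlgHom.id K A)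
    (Algebra.TensorProduct.map (AlgHom.id K A)
      (Algebra.TensorProduct.includeLeft : A →ₐ[K] A ⊗[K] A))

def r2m : (A ⊗[K] (A ⊗[K] A)) →ₐ[K] A ⊗[K] (A ⊗[K] (A ⊗[K] A)) :=
  Algebra.TensorProduct.map (AlgHom.id K A) (QH.Δ1 Q.Δ)

def r3m (_Q : QuasiHopf K A) : (A ⊗[K] (A ⊗[K] A)) →ₐ[K] A ⊗[K] (A ⊗[K] (A ⊗[K] A)) :=
  Algebra.TensorProduct.includeRight

lemma pentagon' :
    t1m Q Q.Φ * t2m Q Q.Φ = r1m Q Q.Φ * r2m Q Q.Φ * r3m Q Q.Φ :=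
  Q.pentagon

@[simp] lemma t1m_tmul (a : A) (r : A ⊗[K] A) :
    t1m Q (a ⊗ₜ[K] r) =
      (Algebra.TensorProduct.assoc K K K A A (A ⊗[K] A)) (Q.Δ a ⊗ₜ[K] r) := by
  simp [t1m]

@[simp] lemma t2m_tmul (a : A) (r : A ⊗[K] A) :
    t2m Q (a ⊗ₜ[K] r) =
      a ⊗ₜ[K] ((Algebra.TensorProduct.map (AlgHom.id K A) Q.Δ) r) := by
  simp [t2m]

@[simp] lemma r1m_tmul (a : A) (r : A ⊗[K] A) :
    r1m Q (a ⊗ₜ[K] r) =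
      a ⊗ₜ[K] ((Algebra.TensorProduct.map (AlgHom.id K A)
        (Algebra.TensorProduct.includeLeft : A →ₐ[K] A ⊗[K] A)) r) := by
  simp [r1m]

@[simp] lemma r2m_tmul (a : A) (r : A ⊗[K] A) :
    r2m Q (a ⊗ₜ[K] r) = a ⊗ₜ[K] (QH.Δ1 Q.Δ r) := by
  simp [r2m]

@[simp] lemma r3m_apply (P : A ⊗[K] (A ⊗[K] A)) :
    r3m Q P = (1 : A) ⊗ₜ[K] P := rfl

@[simp] lemma Δ1_tmul (x y : A) :
    QH.Δ1 Q.Δ (x ⊗ₜ[K] y) =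
      (Algebra.TensorProduct.assoc K K K A A A) (Q.Δ x ⊗ₜ[K] y) := by
  simp [QH.Δ1]

@[simp] lemma oneΔ_tmul (x y : A) :
    QH.oneΔ Q.Δ (x ⊗ₜ[K] y) = x ⊗ₜ[K] Q.Δ y := by
  simp [QH.oneΔ]

/-! ### Counit collapse maps -/

/-- `p ⊗ q ↦ ε p • q` -/
def eml : A ⊗[K] A →ₐ[K] A :=
  (Algebra.TensorProduct.lid K A).toAlgHom.comp
    (Algebra.TensorProduct.map Q.ε (AlgHom.id K A))

@[simp] lemma eml_tmul (p q : A) : eml Q (p ⊗ₜ[K] q) = Q.ε p • q := by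
  simp [eml, Algebra.TensorProduct.lid_tmul]

lemma eml_Δ (a : A) : eml Q (Q.Δ a) = a := Q.counit_left a

/-- `p ⊗ q ↦ ε q • p` -/
def emr : A ⊗[K] A →ₐ[K] A :=
  (Algebra.TensorProduct.rid K K A).toAlgHom.comp
    (Algebra.TensorProduct.map (AlgHom.id K A) Q.ε)

@[simp] lemma emr_tmul (p q : A) : emr Q (p ⊗ₜ[K] q) = Q.ε q • p := by
  simp [emr, Algebra.TensorProduct.rid_tmul]

lemma emr_Δ (a : A) : emr Q (Q.Δ a) = a := Q.counit_right a

/-- `x ⊗ (y ⊗ z) ↦ x ⊗ (ε y • z)` : counit on middle leg. -/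
def cPhiM : (A ⊗[K] (A ⊗[K] A)) →ₐ[K] A ⊗[K] A :=
  Algebra.TensorProduct.map (AlgHom.id K A) (eml Q)

lemma cPhiM_Phi : cPhiM Q Q.Φ = 1 := Q.counit_Φ

@[simp] lemma cPhiM_tmul (x : A) (r : A ⊗[K] A) :
    cPhiM Q (x ⊗ₜ[K] r) = x ⊗ₜ[K] eml Q r := by
  simp [cPhiM]

/-- `x ⊗ r ↦ ε x • r` : counit on first leg. -/
def E1m : (A ⊗[K] (A ⊗[K] A)) →ₐ[K] A ⊗[K] A :=
  (Algebra.TensorProduct.lid K (A ⊗[K] A)).toAlgHom.comp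
    (Algebra.TensorProduct.map Q.ε (AlgHom.id K (A ⊗[K] A)))

@[simp] lemma E1m_tmul (x : A) (r : A ⊗[K] A) :
    E1m Q (x ⊗ₜ[K] r) = Q.ε x • r := by
  simp [E1m, Algebra.TensorProduct.lid_tmul]

/-- `x ⊗ (y ⊗ z) ↦ ε z • (x ⊗ y)` : counit on last leg. -/
def E3m : (A ⊗[K] (A ⊗[K] A)) →ₐ[K] A ⊗[K] A :=
  Algebra.TensorProduct.map (AlgHom.id K A) (emr Q)

@[simp] lemma E3m_tmul (x : A) (r : A ⊗[K] A) :
    E3m Q (x ⊗ₜ[K] r) = x ⊗ₜ[K] emr Q r := by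
  simp [E3m]

/-- counit on leg 2 of the fourfold product. -/
def G2m : (A ⊗[K] (A ⊗[K] (A ⊗[K] A))) →ₐ[K] A ⊗[K] (A ⊗[K] A) :=
  Algebra.TensorProduct.map (AlgHom.id K A) (E1m Q)

@[simp] lemma G2m_tmul (x : A) (r : A ⊗[K] (A ⊗[K] A)) :
    G2m Q (x ⊗ₜ[K] r) = x ⊗ₜ[K] E1m Q r := by
  simp [G2m]

/-- counit on leg 3 of the fourfold product. -/
def G3m : (A ⊗[K] (A ⊗[K] (A ⊗[K] A))) →ₐ[K] A ⊗[K] (A ⊗[K] A) :=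
  Algebra.TensorProduct.map (AlgHom.id K A) (cPhiM Q)

@[simp] lemma G3m_tmul (x : A) (r : A ⊗[K] (A ⊗[K] A)) :
    G3m Q (x ⊗ₜ[K] r) = x ⊗ₜ[K] cPhiM Q r := by
  simp [G3m]

end QHAux

end QHAuxSect2

section QHAuxSect3

set_option maxHeartbeats 1000000
set_option synthInstance.maxHeartbeats 400000
set_option maxRecDepth 4000

open TensorProduct

namespace QHAux

variable {K A : Type*} [Field K] [Ring A] [Algebra K A] (Q : QuasiHopf K A)

/-! ### images of the pentagon factors under the counit collapses -/

lemma G2_assoc (s r : A ⊗[K] A) :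
    G2m Q ((Algebra.TensorProduct.assoc K K K A A (A ⊗[K] A)) (s ⊗ₜ[K] r)) =
      emr Q s ⊗ₜ[K] r := by
  induction s using TensorProduct.induction_on with
  | zero => simp
  | tmul p q =>
      rw [Algebra.TensorProduct.assoc_tmul, G2m_tmul, E1m_tmul, emr_tmul,
        TensorProduct.smul_tmul]
  | add x y hx hy => simp [add_tmul, hx, hy]

lemma P1 (P : A ⊗[K] (A ⊗[K] A)) : G2m Q (t1m Q P) = P := by
  induction P using TensorProduct.induction_on with
  | zero => simp
  | tmul a r => rw [t1m_tmul, G2_assoc, emr_Δ]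
  | add x y hx hy => simp [hx, hy]

lemma E1_mapΔ (r : A ⊗[K] A) :
    E1m Q ((Algebra.TensorProduct.map (AlgHom.id K A) Q.Δ) r) = Q.Δ (eml Q r) := by
  induction r using TensorProduct.induction_on with
  | zero => simp
  | tmul y z => simp
  | add x y hx hy => simp [hx, hy]

lemma P2 (P : A ⊗[K] (A ⊗[K] A)) :
    G2m Q (t2m Q P) = QH.oneΔ Q.Δ (cPhiM Q P) := by
  induction P using TensorProduct.induction_on with
  | zero => simp
  | tmul a r => rw [t2m_tmul, G2m_tmul, E1_mapΔ, cPhiM_tmul, oneΔ_tmul]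
  | add x y hx hy => simp [hx, hy]

lemma E1_mapIncl (r : A ⊗[K] A) :
    E1m Q ((Algebra.TensorProduct.map (AlgHom.id K A)
      (Algebra.TensorProduct.includeLeft : A →ₐ[K] A ⊗[K] A)) r) =
      (Algebra.TensorProduct.includeLeft : A →ₐ[K] A ⊗[K] A) (eml Q r) := by
  induction r using TensorProduct.induction_on with
  | zero => simp
  | tmul y z =>
      simp [Algebra.TensorProduct.includeLeft_apply, TensorProduct.smul_tmul']
  | add x y hx hy => simp [add_tmul, hx, hy]

lemma P3 (P : A ⊗[K] (A ⊗[K] A)) :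
    G2m Q (r1m Q P) = QH.leg12 K A (cPhiM Q P) := by
  induction P using TensorProduct.induction_on with
  | zero => simp
  | tmul a r => rw [r1m_tmul, G2m_tmul, E1_mapIncl, cPhiM_tmul]; simp [QH.leg12]
  | add x y hx hy => simp [hx, hy]

lemma E1_assocAAA (s : A ⊗[K] A) (z : A) :
    E1m Q ((Algebra.TensorProduct.assoc K K K A A A) (s ⊗ₜ[K] z)) =
      eml Q s ⊗ₜ[K] z := by
  induction s using TensorProduct.induction_on with
  | zero => simp
  | tmul p q =>
      simp [Algebra.TensorProduct.assoc_tmul, TensorProduct.smul_tmul']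
  | add x y hx hy => simp [add_tmul, hx, hy]

lemma E1_Δ1 (r : A ⊗[K] A) : E1m Q (QH.Δ1 Q.Δ r) = r := by
  induction r using TensorProduct.induction_on with
  | zero => simp
  | tmul y z => rw [Δ1_tmul, E1_assocAAA, eml_Δ]
  | add x y hx hy => simp [hx, hy]

lemma P4 (P : A ⊗[K] (A ⊗[K] A)) : G2m Q (r2m Q P) = P := by
  induction P using TensorProduct.induction_on with
  | zero => simp
  | tmul a r => rw [r2m_tmul, G2m_tmul, E1_Δ1]
  | add x y hx hy => simp [hx, hy]

lemma P5 (P : A ⊗[K] (A ⊗[K] A)) :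
    G2m Q (r3m Q P) = QH.leg23 K A (E1m Q P) := by
  rw [r3m_apply, G2m_tmul]; rfl

lemma leg23_E1 (x : A ⊗[K] A) : E1m Q (QH.leg23 K A x) = x := by
  show E1m Q ((1:A) ⊗ₜ[K] x) = x
  simp

/-- `(ε ⊗ id ⊗ id) Φ = 1`. -/
lemma CU1 : E1m Q Q.Φ = 1 := by
  have hp := congrArg (G2m Q) (pentagon' Q)
  rw [map_mul, map_mul, map_mul, P1, P2, P3, P4, P5, cPhiM_Phi, map_one,
    map_one, mul_one, one_mul] at hp
  -- hp : Q.Φ = Q.Φ * leg23 (E1m Q.Φ)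
  have h2 : QH.leg23 K A (E1m Q Q.Φ) = 1 := by
    have := congrArg (Q.Φ' * ·) hp
    simpa [← mul_assoc, Q.Φ_inv'] using this.symm
  have := congrArg (E1m Q) h2
  rwa [leg23_E1, map_one] at this

end QHAux

end QHAuxSect3

section QHAuxSect4

set_option maxHeartbeats 1000000
set_option synthInstance.maxHeartbeats 400000
set_option maxRecDepth 4000

open TensorProduct

namespace QHAux

variable {K A : Type*} [Field K] [Ring A] [Algebra K A] (Q : QuasiHopf K A)

lemma G3_assoc (s r : A ⊗[K] A) :
    G3m Q ((Algebra.TensorProduct.assoc K K K A A (A ⊗[K] A)) (s ⊗ₜ[K] r)) =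
      (Algebra.TensorProduct.assoc K K K A A A) (s ⊗ₜ[K] eml Q r) := by
  induction s using TensorProduct.induction_on with
  | zero => simp
  | tmul p q => rw [Algebra.TensorProduct.assoc_tmul, G3m_tmul, cPhiM_tmul,
      Algebra.TensorProduct.assoc_tmul]
  | add x y hx hy => simp [add_tmul, hx, hy]

lemma P1' (P : A ⊗[K] (A ⊗[K] A)) :
    G3m Q (t1m Q P) = QH.Δ1 Q.Δ (cPhiM Q P) := by
  induction P using TensorProduct.induction_on with
  | zero => simp
  | tmul a r => rw [t1m_tmul, G3_assoc, cPhiM_tmul, Δ1_tmul]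
  | add x y hx hy => simp [hx, hy]

lemma cPhi_mapΔ (r : A ⊗[K] A) :
    cPhiM Q ((Algebra.TensorProduct.map (AlgHom.id K A) Q.Δ) r) = r := by
  induction r using TensorProduct.induction_on with
  | zero => simp
  | tmul y z => simp [eml_Δ]
  | add x y hx hy => simp [hx, hy]

lemma P2' (P : A ⊗[K] (A ⊗[K] A)) : G3m Q (t2m Q P) = P := by
  induction P using TensorProduct.induction_on with
  | zero => simp
  | tmul a r => rw [t2m_tmul, G3m_tmul, cPhi_mapΔ]
  | add x y hx hy => simp [hx, hy]

lemma cPhi_mapIncl (r : A ⊗[K] A) :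
    cPhiM Q ((Algebra.TensorProduct.map (AlgHom.id K A)
      (Algebra.TensorProduct.includeLeft : A →ₐ[K] A ⊗[K] A)) r) =
      (Algebra.TensorProduct.includeLeft : A →ₐ[K] A ⊗[K] A) (emr Q r) := by
  induction r using TensorProduct.induction_on with
  | zero => simp
  | tmul y z =>
      simp only [Algebra.TensorProduct.map_tmul, AlgHom.id_apply,
        Algebra.TensorProduct.includeLeft_apply, cPhiM_tmul, eml_tmul,
        emr_tmul, TensorProduct.tmul_smul, ← TensorProduct.smul_tmul']
  | add x y hx hy => simp [add_tmul, hx, hy]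

lemma P3' (P : A ⊗[K] (A ⊗[K] A)) :
    G3m Q (r1m Q P) = QH.leg12 K A (E3m Q P) := by
  induction P using TensorProduct.induction_on with
  | zero => simp
  | tmul a r => rw [r1m_tmul, G3m_tmul, cPhi_mapIncl, E3m_tmul]; rfl
  | add x y hx hy => simp [hx, hy]

lemma cPhi_assocAAA (s : A ⊗[K] A) (z : A) :
    cPhiM Q ((Algebra.TensorProduct.assoc K K K A A A) (s ⊗ₜ[K] z)) =
      emr Q s ⊗ₜ[K] z := by
  induction s using TensorProduct.induction_on with
  | zero => simp
  | tmul p q => rw [Algebra.TensorProduct.assoc_tmul, cPhiM_tmul, eml_tmul,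
      emr_tmul, TensorProduct.smul_tmul]
  | add x y hx hy => simp [add_tmul, hx, hy]

lemma cPhi_Δ1 (r : A ⊗[K] A) : cPhiM Q (QH.Δ1 Q.Δ r) = r := by
  induction r using TensorProduct.induction_on with
  | zero => simp
  | tmul y z => rw [Δ1_tmul, cPhi_assocAAA, emr_Δ]
  | add x y hx hy => simp [hx, hy]

lemma P4' (P : A ⊗[K] (A ⊗[K] A)) : G3m Q (r2m Q P) = P := by
  induction P using TensorProduct.induction_on with
  | zero => simp
  | tmul a r => rw [r2m_tmul, G3m_tmul, cPhi_Δ1]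
  | add x y hx hy => simp [hx, hy]

lemma P5' (P : A ⊗[K] (A ⊗[K] A)) :
    G3m Q (r3m Q P) = QH.leg23 K A (cPhiM Q P) := by
  rw [r3m_apply, G3m_tmul]; rfl

lemma leg12_E3 (x : A ⊗[K] A) : E3m Q (QH.leg12 K A x) = x := by
  induction x using TensorProduct.induction_on with
  | zero => simp
  | tmul p q => simp [QH.leg12]
  | add x y hx hy => simp [hx, hy]

/-- `(id ⊗ id ⊗ ε) Φ = 1`. -/
lemma CU3 : E3m Q Q.Φ = 1 := by
  have hp := congrArg (G3m Q) (pentagon' Q)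
  rw [map_mul, map_mul, map_mul, P1', P2', P3', P4', P5', cPhiM_Phi, map_one,
    map_one, one_mul, mul_one] at hp
  -- hp : Q.Φ = leg12 (E3m Q.Φ) * Q.Φ
  have h2 : QH.leg12 K A (E3m Q Q.Φ) = 1 := by
    have := congrArg (· * Q.Φ') hp
    simpa [mul_assoc, Q.Φ_inv] using this.symm
  have := congrArg (E3m Q) h2
  rwa [leg12_E3, map_one] at this

lemma CU1' : E1m Q Q.Φ' = 1 := by
  have h : E1m Q Q.Φ' * E1m Q Q.Φ = 1 := by
    rw [← map_mul, Q.Φ_inv', map_one]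
  rwa [CU1, mul_one] at h

lemma CU3' : E3m Q Q.Φ' = 1 := by
  have h : E3m Q Q.Φ' * E3m Q Q.Φ = 1 := by
    rw [← map_mul, Q.Φ_inv', map_one]
  rwa [CU3, mul_one] at h

end QHAux

end QHAuxSect4

section QHAuxSect5

set_option maxHeartbeats 1000000
set_option synthInstance.maxHeartbeats 400000
set_option maxRecDepth 4000

open TensorProduct

namespace QHAux

variable {K A : Type*} [Field K] [Ring A] [Algebra K A] (Q : QuasiHopf K A)

/-- `x ↦ 1 ⊗ (1 ⊗ x)` -/
def iim (_Q : QuasiHopf K A) : (A ⊗[K] A) →ₐ[K] A ⊗[K] (A ⊗[K] (A ⊗[K] A)) :=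
  (Algebra.TensorProduct.includeRight).comp (Algebra.TensorProduct.includeRight)

@[simp] lemma iim_apply (x : A ⊗[K] A) :
    iim Q x = (1 : A) ⊗ₜ[K] ((1 : A) ⊗ₜ[K] x) := rfl

/-- `p ⊗ q ↦ p ⊗ (q ⊗ 1)` -/
def kkm (_Q : QuasiHopf K A) : (A ⊗[K] A) →ₐ[K] A ⊗[K] (A ⊗[K] (A ⊗[K] A)) :=
  Algebra.TensorProduct.map (AlgHom.id K A)
    (Algebra.TensorProduct.includeLeft : A →ₐ[K] A ⊗[K] (A ⊗[K] A))

@[simp] lemma kkm_tmul (p q : A) :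
    kkm Q (p ⊗ₜ[K] q) = p ⊗ₜ[K] (q ⊗ₜ[K] (1 : A ⊗[K] A)) := by
  simp [kkm]

/-- `p ⊗ q ↦ p ⊗ (1 ⊗ (1 ⊗ q))` -/
def llm (_Q : QuasiHopf K A) : (A ⊗[K] A) →ₐ[K] A ⊗[K] (A ⊗[K] (A ⊗[K] A)) :=
  Algebra.TensorProduct.map (AlgHom.id K A)
    ((Algebra.TensorProduct.includeRight).comp
      (Algebra.TensorProduct.includeRight) : A →ₐ[K] A ⊗[K] (A ⊗[K] A))

@[simp] lemma llm_tmul (p q : A) :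
    llm Q (p ⊗ₜ[K] q) = p ⊗ₜ[K] ((1 : A) ⊗ₜ[K] ((1 : A) ⊗ₜ[K] q)) := by
  simp [llm]

/-- Key collapse for the `t1m` factor. -/
lemma XiR1a (c t u b d : A) (r s : A ⊗[K] A) :
    Xi Q c ((t ⊗ₜ[K] (u ⊗ₜ[K] r)) *
        (Algebra.TensorProduct.assoc K K K A A (A ⊗[K] A)) (s ⊗ₜ[K] (b ⊗ₜ[K] d))) =
      (t * QH.adE Q.S c s) *
        ((Q.S u * Q.α) * QH.adE Q.S Q.β (r * (b ⊗ₜ[K] d))) := by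
  induction s using TensorProduct.induction_on with
  | zero => simp
  | tmul p q =>
      rw [Algebra.TensorProduct.assoc_tmul]
      rw [Algebra.TensorProduct.tmul_mul_tmul, Algebra.TensorProduct.tmul_mul_tmul]
      rw [Xi_tmul, swl_tmul, adE_tmul]
      simp [Q.S_mul, mul_assoc]
  | add x y hx hy => simp [add_tmul, mul_add, add_mul, hx, hy]

lemma XiR1 (c : A) (hc : ∀ a : A, QH.adE Q.S c (Q.Δ a) = Q.ε a • c)
    (T : A ⊗[K] (A ⊗[K] (A ⊗[K] A))) (P : A ⊗[K] (A ⊗[K] A)) :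
    Xi Q c (T * t1m Q P) = Xi Q c (T * iim Q (E1m Q P)) := by
  induction T using TensorProduct.induction_on with
  | zero => simp
  | add x y hx hy => simp only [t4_add_mul, map_add, hx, hy]
  | tmul t r3 =>
    induction r3 using TensorProduct.induction_on with
    | zero => simp
    | add x y hx hy =>
        simp only [TensorProduct.tmul_add, t4_add_mul, map_add, hx, hy]
    | tmul u r =>
      induction P using TensorProduct.induction_on with
      | zero => simp
      | add x y hx hy => simp only [map_add, t4_mul_add, hx, hy]
      | tmul a rb =>
        induction rb using TensorProduct.induction_on with
        | zero => simp
        | add x y hx hy =>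
            simp only [TensorProduct.tmul_add, map_add, t4_mul_add, hx, hy]
        | tmul b d =>
          rw [t1m_tmul, XiR1a, hc a, E1m_tmul, map_smul, t4_mul_smul, map_smul]
          rw [iim_apply, Algebra.TensorProduct.tmul_mul_tmul,
            Algebra.TensorProduct.tmul_mul_tmul, Xi_tmul, swl_tmul]
          simp [smul_mul_assoc, mul_smul_comm, mul_assoc]
  -- done

end QHAux

end QHAuxSect5

section QHAuxSect6

set_option maxHeartbeats 1000000
set_option synthInstance.maxHeartbeats 400000
set_option maxRecDepth 4000

open TensorProduct

namespace QHAux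

variable {K A : Type*} [Field K] [Ring A] [Algebra K A] (Q : QuasiHopf K A)

lemma XiR2 (c : A) (T : A ⊗[K] (A ⊗[K] (A ⊗[K] A))) (P : A ⊗[K] (A ⊗[K] A)) :
    Xi Q c (T * t2m Q P) = Xi Q c (T * kkm Q (E3m Q P)) := by
  induction T using TensorProduct.induction_on with
  | zero => simp
  | add x y hx hy => simp only [t4_add_mul, map_add, hx, hy]
  | tmul t r3 =>
    induction r3 using TensorProduct.induction_on with
    | zero => simp
    | add x y hx hy =>
        simp only [TensorProduct.tmul_add, t4_add_mul, map_add, hx, hy]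
    | tmul u r =>
      induction r using TensorProduct.induction_on with
      | zero => simp
      | add x y hx hy =>
          simp only [TensorProduct.tmul_add, t4_add_mul, map_add, hx, hy]
      | tmul v w =>
        induction P using TensorProduct.induction_on with
        | zero => simp
        | add x y hx hy => simp only [map_add, t4_mul_add, hx, hy]
        | tmul X rYZ =>
          induction rYZ using TensorProduct.induction_on with
          | zero => simp
          | add x y hx hy =>
              simp only [TensorProduct.tmul_add, map_add, t4_mul_add, hx, hy]
          | tmul Y Z =>
            rw [t2m_tmul, Algebra.TensorProduct.map_tmul, AlgHom.id_apply,
              Algebra.TensorProduct.tmul_mul_tmul,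
              Algebra.TensorProduct.tmul_mul_tmul, Xi_tmul, swl_tmul,
              adE_mul, Q.antipode_β, E3m_tmul, emr_tmul, TensorProduct.tmul_smul, map_smul, kkm_tmul,
              t4_mul_smul, map_smul, Algebra.TensorProduct.tmul_mul_tmul,
              Algebra.TensorProduct.tmul_mul_tmul, Xi_tmul, swl_tmul,
              t2_mul_one, adE_tmul]
            simp [Q.S_mul, smul_mul_assoc, mul_smul_comm, mul_assoc]

/-- Key collapse for the `r2m`/`r3m` product. -/
lemma XiFa (z x' : A) (s r' : A ⊗[K] A) :
    swl Q ((Algebra.TensorProduct.assoc K K K A A A) (s ⊗ₜ[K] z) * (x' ⊗ₜ[K] r')) =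
      Q.S x' * (QH.antiAdE Q.S Q.α s * (QH.adE Q.S Q.β r' * Q.S z)) := by
  induction s using TensorProduct.induction_on with
  | zero => simp
  | add x y hx hy => simp only [add_tmul, map_add, t3_add_mul, antiAdE_add,
      add_mul, mul_add, hx, hy]
  | tmul p q =>
    rw [Algebra.TensorProduct.assoc_tmul, Algebra.TensorProduct.tmul_mul_tmul,
      swl_tmul, adE_mul, antiAdE_tmul, Q.S_mul]
    simp [mul_assoc]

lemma XiF (c : A) (P P' : A ⊗[K] (A ⊗[K] A)) :
    Xi Q c (r2m Q P * r3m Q P') = Xi Q c (llm Q (cPhiM Q P) * r3m Q P') := by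
  induction P using TensorProduct.induction_on with
  | zero => simp
  | add x y hx hy => simp only [map_add, t4_add_mul, hx, hy]
  | tmul x rYZ =>
    induction rYZ using TensorProduct.induction_on with
    | zero => simp
    | add x' y' hx hy =>
        simp only [TensorProduct.tmul_add, map_add, t4_add_mul, hx, hy]
    | tmul y z =>
      induction P' using TensorProduct.induction_on with
      | zero => simp
      | add x' y' hx hy => simp only [map_add, t4_mul_add, hx, hy]
      | tmul x' r' =>
        rw [r2m_tmul, Δ1_tmul, r3m_apply, Algebra.TensorProduct.tmul_mul_tmul,
          Xi_tmul, XiFa, Q.antipode_α, cPhiM_tmul, eml_tmul, TensorProduct.tmul_smul, map_smul,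
          t4_smul_mul, map_smul, llm_tmul, Algebra.TensorProduct.tmul_mul_tmul,
          Xi_tmul, Algebra.TensorProduct.tmul_mul_tmul, swl_tmul]
        simp [adE_mul, Q.S_one, smul_mul_assoc, mul_smul_comm, mul_assoc]

lemma Xi_r3 (c : A) (P' : A ⊗[K] (A ⊗[K] A)) :
    Xi Q c (r3m Q P') = c * swl Q P' := by
  rw [r3m_apply, Xi_tmul, one_mul]

lemma Xi_r1 (c : A) (P : A ⊗[K] (A ⊗[K] A)) :
    Xi Q c (r1m Q P) = QH.C1inv Q.S Q.α c P * Q.β := by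
  induction P using TensorProduct.induction_on with
  | zero => simp [QH.C1inv, QH.mul3]
  | add x y hx hy => simp only [map_add, hx, hy]; simp [QH.C1inv, QH.mul3, add_mul]
  | tmul x rYZ =>
    induction rYZ using TensorProduct.induction_on with
    | zero =>
        simp [QH.C1inv, QH.mul3]
    | add x' y' hx hy =>
        simp only [TensorProduct.tmul_add, map_add, hx, hy]
        simp [QH.C1inv, QH.mul3, add_mul, mul_add]
    | tmul y z =>
      rw [r1m_tmul, Algebra.TensorProduct.map_tmul, AlgHom.id_apply,
        Algebra.TensorProduct.includeLeft_apply, Xi_tmul, swl_tmul, adE_tmul,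
        Q.S_one]
      simp [QH.C1inv, QH.mul3, mul_assoc]

end QHAux

end QHAuxSect6

section QHAuxSect7

set_option maxHeartbeats 1000000
set_option synthInstance.maxHeartbeats 400000
set_option maxRecDepth 4000

open TensorProduct

namespace QHAux

variable {K A : Type*} [Field K] [Ring A] [Algebra K A] (Q : QuasiHopf K A)

/-! ### `C1inv` and centrality -/

def psi (c : A) : A ⊗[K] A →ₗ[K] A :=
  (LinearMap.mul' K A).comp
    (TensorProduct.map
      ((LinearMap.mulLeft K c).comp ((LinearMap.mulRight K Q.α).comp Q.S))
      LinearMap.id)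

@[simp] lemma psi_tmul (c y z : A) :
    psi Q c (y ⊗ₜ[K] z) = (c * (Q.S y * Q.α)) * z := by
  simp [psi, mul_assoc]

lemma C1inv_tmul (c x : A) (r : A ⊗[K] A) :
    QH.C1inv Q.S Q.α c (x ⊗ₜ[K] r) = x * psi Q c r := by
  simp [QH.C1inv, QH.mul3, psi]

@[simp] lemma C1inv_zero (c : A) : QH.C1inv Q.S Q.α c 0 = 0 := by
  simp [QH.C1inv, QH.mul3]

@[simp] lemma C1inv_add (c : A) (s t : A ⊗[K] (A ⊗[K] A)) :
    QH.C1inv Q.S Q.α c (s + t) =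
      QH.C1inv Q.S Q.α c s + QH.C1inv Q.S Q.α c t := by
  simp [QH.C1inv, QH.mul3]

@[simp] lemma C1inv_smul (c : A) (k : K) (t : A ⊗[K] (A ⊗[K] A)) :
    QH.C1inv Q.S Q.α c (k • t) = k • QH.C1inv Q.S Q.α c t := by
  simp [QH.C1inv, QH.mul3]

lemma psi_mul (c v w : A) (s : A ⊗[K] A) :
    psi Q c (s * (v ⊗ₜ[K] w)) = (c * Q.S v) * (QH.antiAdE Q.S Q.α s * w) := by
  induction s using TensorProduct.induction_on with
  | zero => simp
  | add x y hx hy => simp [t2_add_mul, hx, hy, mul_add, add_mul]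
  | tmul a b =>
      rw [Algebra.TensorProduct.tmul_mul_tmul, psi_tmul, antiAdE_tmul, Q.S_mul]
      simp [mul_assoc]

lemma L2a (c u v w q : A) (s : A ⊗[K] A) :
    QH.C1inv Q.S Q.α c ((u ⊗ₜ[K] (v ⊗ₜ[K] w)) *
        (Algebra.TensorProduct.assoc K K K A A A) (s ⊗ₜ[K] q)) =
      (u * QH.adE Q.S c s) * ((Q.S v * Q.α) * (w * q)) := by
  induction s using TensorProduct.induction_on with
  | zero => simp
  | add x y hx hy => simp [add_tmul, t3_mul_add, hx, hy, mul_add, add_mul]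
  | tmul p1 p2 =>
      rw [Algebra.TensorProduct.assoc_tmul, Algebra.TensorProduct.tmul_mul_tmul,
        Algebra.TensorProduct.tmul_mul_tmul, C1inv_tmul, psi_tmul, adE_tmul,
        Q.S_mul]
      simp [mul_assoc]

lemma L2gen (c : A) (hc : ∀ a : A, QH.adE Q.S c (Q.Δ a) = Q.ε a • c)
    (t : A ⊗[K] (A ⊗[K] A)) (x : A ⊗[K] A) :
    QH.C1inv Q.S Q.α c (t * QH.Δ1 Q.Δ x) =
      QH.C1inv Q.S Q.α c t * eml Q x := by
  induction t using TensorProduct.induction_on with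
  | zero => simp
  | add a b ha hb => simp only [t3_add_mul, C1inv_add, ha, hb, add_mul]
  | tmul u r =>
    induction r using TensorProduct.induction_on with
    | zero => simp
    | add a b ha hb =>
        simp only [TensorProduct.tmul_add, t3_add_mul, C1inv_add, ha, hb, add_mul]
    | tmul v w =>
      induction x using TensorProduct.induction_on with
      | zero => simp
      | add a b ha hb => simp only [map_add, t3_mul_add, C1inv_add, ha, hb, mul_add]
      | tmul p q =>
        rw [Δ1_tmul, L2a, hc p, eml_tmul, C1inv_tmul, psi_tmul]
        simp [smul_mul_assoc, mul_smul_comm, mul_assoc]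

lemma L1a (c p u v w : A) (s : A ⊗[K] A) :
    QH.C1inv Q.S Q.α c ((p ⊗ₜ[K] s) * (u ⊗ₜ[K] (v ⊗ₜ[K] w))) =
      (p * u) * ((c * Q.S v) * (QH.antiAdE Q.S Q.α s * w)) := by
  rw [Algebra.TensorProduct.tmul_mul_tmul, C1inv_tmul, psi_mul]

lemma L1gen (c : A) (t : A ⊗[K] (A ⊗[K] A)) (x : A ⊗[K] A) :
    QH.C1inv Q.S Q.α c (QH.oneΔ Q.Δ x * t) =
      emr Q x * QH.C1inv Q.S Q.α c t := by
  induction t using TensorProduct.induction_on with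
  | zero => simp
  | add a b ha hb => simp only [t3_mul_add, C1inv_add, ha, hb, mul_add]
  | tmul u r =>
    induction r using TensorProduct.induction_on with
    | zero => simp
    | add a b ha hb =>
        simp only [TensorProduct.tmul_add, t3_mul_add, C1inv_add, ha, hb, mul_add]
    | tmul v w =>
      induction x using TensorProduct.induction_on with
      | zero => simp
      | add a b ha hb => simp only [map_add, t3_add_mul, C1inv_add, ha, hb, add_mul]
      | tmul p q =>
        rw [oneΔ_tmul, L1a, Q.antipode_α, emr_tmul, C1inv_tmul, psi_tmul]
        simp [smul_mul_assoc, mul_smul_comm, mul_assoc]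

lemma QCflip (a : A) :
    QH.oneΔ Q.Δ (Q.Δ a) * Q.Φ' = Q.Φ' * QH.Δ1 Q.Δ (Q.Δ a) := by
  have key : ∀ X Y : A ⊗[K] (A ⊗[K] A),
      Q.Φ * X = Y * Q.Φ → X * Q.Φ' = Q.Φ' * Y := by
    intro X Y h
    calc X * Q.Φ' = (Q.Φ' * Q.Φ) * X * Q.Φ' := by rw [Q.Φ_inv', t3_one_mul]
      _ = Q.Φ' * ((Q.Φ * X) * Q.Φ') := by
        rw [t3_mul_assoc Q.Φ' Q.Φ X, t3_mul_assoc Q.Φ' (Q.Φ * X) Q.Φ']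
      _ = Q.Φ' * ((Y * Q.Φ) * Q.Φ') := by rw [h]
      _ = Q.Φ' * (Y * (Q.Φ * Q.Φ')) := by rw [t3_mul_assoc]
      _ = Q.Φ' * Y := by rw [Q.Φ_inv, t3_mul_one]
  exact key _ _ (Q.quasi_coassoc a)

lemma central (c : A) (hc : ∀ a : A, QH.adE Q.S c (Q.Δ a) = Q.ε a • c)
    (b : A) :
    QH.C1inv Q.S Q.α c Q.Φ' * b = b * QH.C1inv Q.S Q.α c Q.Φ' := by
  have h1 := L2gen Q c hc Q.Φ' (Q.Δ b)
  have h2 := L1gen Q c Q.Φ' (Q.Δ b)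
  rw [eml_Δ] at h1
  rw [emr_Δ] at h2
  rw [← QCflip Q b, h2] at h1
  exact h1.symm

end QHAux

end QHAuxSect7

section QHAuxSect8

set_option maxHeartbeats 1000000
set_option synthInstance.maxHeartbeats 400000
set_option maxRecDepth 4000

open TensorProduct

namespace QHAux

variable {K A : Type*} [Field K] [Ring A] [Algebra K A] (Q : QuasiHopf K A)

lemma pent_rearr :
    r2m Q Q.Φ * r3m Q Q.Φ * t2m Q Q.Φ' * t1m Q Q.Φ' = r1m Q Q.Φ' := by
  have i1 : t1m Q Q.Φ * t1m Q Q.Φ' = 1 := by rw [← map_mul, Q.Φ_inv]; exact (t1m Q).map_one'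
  have i2 : t2m Q Q.Φ * t2m Q Q.Φ' = 1 := by rw [← map_mul, Q.Φ_inv]; exact (t2m Q).map_one'
  have i3 : r1m Q Q.Φ' * r1m Q Q.Φ = 1 := by rw [← map_mul, Q.Φ_inv']; exact (r1m Q).map_one'
  calc r2m Q Q.Φ * r3m Q Q.Φ * t2m Q Q.Φ' * t1m Q Q.Φ'
      = (r1m Q Q.Φ' * r1m Q Q.Φ) *
          (r2m Q Q.Φ * r3m Q Q.Φ * t2m Q Q.Φ' * t1m Q Q.Φ') := by
        rw [i3, t4_one_mul]
    _ = r1m Q Q.Φ' * ((r1m Q Q.Φ * r2m Q Q.Φ * r3m Q Q.Φ) *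
          (t2m Q Q.Φ' * t1m Q Q.Φ')) := by
        simp only [t4_mul_assoc]
    _ = r1m Q Q.Φ' * ((t1m Q Q.Φ * t2m Q Q.Φ) *
          (t2m Q Q.Φ' * t1m Q Q.Φ')) := by
        rw [← pentagon' Q]
    _ = r1m Q Q.Φ' * (t1m Q Q.Φ * ((t2m Q Q.Φ * t2m Q Q.Φ') * t1m Q Q.Φ')) := by
        simp only [t4_mul_assoc]
    _ = r1m Q Q.Φ' := by rw [i2, t4_one_mul, i1, t4_mul_one]

lemma forward (c : A) (hc : ∀ a : A, QH.adE Q.S c (Q.Δ a) = Q.ε a • c) :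
    QH.C1inv Q.S Q.α c Q.Φ' * Q.β = c := by
  have h2 : Xi Q c (r1m Q Q.Φ') = c := by
    rw [← pent_rearr Q]
    rw [XiR1 Q c hc, CU1', show iim Q (1 : A ⊗[K] A) = 1 from (iim Q).map_one', t4_mul_one]
    rw [XiR2 Q c, CU3', show kkm Q (1 : A ⊗[K] A) = 1 from (kkm Q).map_one', t4_mul_one]
    rw [XiF Q c, cPhiM_Phi, show llm Q (1 : A ⊗[K] A) = 1 from (llm Q).map_one', t4_one_mul, Xi_r3, swl_Phi, mul_one]
  rw [← Xi_r1 Q c Q.Φ', h2]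

lemma adE_central (C b : A) (hC : ∀ x : A, C * x = x * C) (t : A ⊗[K] A) :
    QH.adE Q.S (C * b) t = C * QH.adE Q.S b t := by
  induction t using TensorProduct.induction_on with
  | zero => simp
  | add x y hx hy => simp [hx, hy, mul_add]
  | tmul x y =>
      simp only [adE_tmul, ← mul_assoc]
      rw [← hC x]

end QHAux

end QHAuxSect8
/-- `c` is adjoint-invariant iff there is a central element `C` with
`c = Cβ = βC`. -/
theorem statement9 {K A : Type*} [Field K] [Ring A] [Algebra K A] (Q : QuasiHopf K A) (c : A) :
    (∀ a : A, QH.ad Q.Δ Q.S a c = Q.ε a • c) ↔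
      ∃ C : A, (∀ b : A, C * b = b * C) ∧ c = C * Q.β ∧ c = Q.β * C := by
  constructor
  · intro hc
    have hc' : ∀ a : A, QH.adE Q.S c (Q.Δ a) = Q.ε a • c := hc
    refine ⟨QH.C1inv Q.S Q.α c Q.Φ', QHAux.central Q c hc',
      (QHAux.forward Q c hc').symm, ?_⟩
    rw [← QHAux.central Q c hc' Q.β]
    exact (QHAux.forward Q c hc').symm
  · rintro ⟨C, hC, hcb, -⟩ a
    show QH.adE Q.S c (Q.Δ a) = Q.ε a • c
    rw [hcb, QHAux.adE_central Q C Q.β hC, Q.antipode_β, mul_smul_comm]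
end
end
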